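/- arXiv:1405.7552 — 5 statements merged into one kernel-verified Lean document; each statement's English description precedes it below -/
import Mathlib

section
/- For the caterpillar graph on 6ℓ−1 vertices with the specified single-basin potential W, the vector ψ defined by ψ(B₀)=2/3, ψ(B_j)=(2/3)^j for 1≤j≤ℓ, ψ(C_ℓ)=(1/8)(2/3)^ℓ, ψ(C₁)=(2/3)(11/12 − 1/(8ℓ)), and ψ(C_j)=((2/3)−j/(8ℓ))(2/3)^j for 2≤j≤ℓ−1 is an eigenvector of H_{G,W} with eigenvalue zero, and all its entries are positive, so it is the ground state of H_{G,W}. -/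
/-!
If `H ψ = 0` for a strictly positive `ψ`, then `W = -(L ψ) / ψ` pointwise, and substituting
`x = ψ f` turns the quadratic form of `H = L + W` into
`∑_{u ~ v} ψ u ψ v (f u - f v)² / 2 ≥ 0` (the ground-state transform). So `H` is positive
semidefinite and `0`, an eigenvalue, is the bottom of its spectrum.

For the caterpillar, `catPsi` and `catW` only depend on the mirror label `j` of a vertex, so
`H ψ = 0` reduces to four scalar identities in `j`: at the ends `B₀`, at an interior spine vertex
`B_j` (`1 ≤ j < ℓ`), at the centre `B_ℓ`, and at a leg `C_j`.
-/

open Matrix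

noncomputable def hamiltonian {V : Type*} [Fintype V] [DecidableEq V]
    (G : SimpleGraph V) [DecidableRel G.Adj] (W : V → ℝ) : Matrix V V ℝ :=
  G.lapMatrix ℝ + Matrix.diagonal W

/-- Vertices of the caterpillar graph on `6ℓ − 1` vertices: a spine path of
`2ℓ+1` vertices (positions `0,…,2ℓ`, center `ℓ`), and for each interior spine
position `k+1` (for `k : Fin (2ℓ−1)`) two pendant legs (top/bottom). -/
abbrev CatV (ℓ : ℕ) : Type := Fin (2 * ℓ + 1) ⊕ (Fin (2 * ℓ - 1) × Bool)

/-- The caterpillar graph: spine edges between consecutive positions, legs attached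
to spine position `k+1`. -/
def catGraph (ℓ : ℕ) : SimpleGraph (CatV ℓ) where
  Adj a b :=
    match a, b with
    | .inl i, .inl i' => i.val + 1 = i'.val ∨ i'.val + 1 = i.val
    | .inl i, .inr (k, _) => i.val = k.val + 1
    | .inr (k, _), .inl i => i.val = k.val + 1
    | .inr _, .inr _ => False
  symm := by constructor; rintro (i | ⟨k, t⟩) (i' | ⟨k', t'⟩) h <;> simp_all <;> tauto
  loopless := by constructor; rintro (i | ⟨k, t⟩) h <;> simp_all

instance (ℓ : ℕ) : DecidableRel (catGraph ℓ).Adj := fun a b =>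
  match a, b with
  | .inl i, .inl i' => inferInstanceAs (Decidable (_ ∨ _))
  | .inl i, .inr (k, _) => inferInstanceAs (Decidable (_ = _))
  | .inr (k, _), .inl i => inferInstanceAs (Decidable (_ = _))
  | .inr _, .inr _ => inferInstanceAs (Decidable False)

/-- The mirror-symmetric label `j ∈ {0,…,ℓ}` of spine position `i ∈ {0,…,2ℓ}`:
`B_0` at the two ends, `B_ℓ` at the center. -/
def jB (ℓ : ℕ) (i : Fin (2 * ℓ + 1)) : ℕ := if i.val ≤ ℓ then i.val else 2 * ℓ - i.val

/-- The label `j ∈ {1,…,ℓ}` of the leg attached at spine position `k+1`. -/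
def jC (ℓ : ℕ) (k : Fin (2 * ℓ - 1)) : ℕ :=
  if k.val + 1 ≤ ℓ then k.val + 1 else 2 * ℓ - (k.val + 1)

/-- The potential on the caterpillar graph. -/
noncomputable def catW (ℓ : ℕ) : CatV ℓ → ℝ
  | .inl i =>
      if jB ℓ i = 0 then 0 else -1/2 - (jB ℓ i : ℝ) / (4 * (ℓ : ℝ))
  | .inr (k, _) =>
      if jC ℓ k = 1 then 1 / (11/12 - 1/(8 * (ℓ : ℝ))) - 1
      else if jC ℓ k = ℓ then 7
      else 1 / (2/3 - (jC ℓ k : ℝ) / (8 * (ℓ : ℝ))) - 1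

/-- The claimed ground state. -/
noncomputable def catPsi (ℓ : ℕ) : CatV ℓ → ℝ
  | .inl i =>
      if jB ℓ i = 0 then 2/3 else (2/3 : ℝ) ^ (jB ℓ i)
  | .inr (k, _) =>
      if jC ℓ k = 1 then (2/3) * (11/12 - 1/(8 * (ℓ : ℝ)))
      else if jC ℓ k = ℓ then (1/8) * (2/3 : ℝ) ^ ℓ
      else (2/3 - (jC ℓ k : ℝ) / (8 * (ℓ : ℝ))) * (2/3 : ℝ) ^ (jC ℓ k)

section GroundState

variable {V : Type*} [Fintype V] [DecidableEq V] (G : SimpleGraph V) [DecidableRel G.Adj]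
  (W : V → ℝ)

lemma hamiltonian_mulVec_apply (x : V → ℝ) (v : V) :
    (hamiltonian G W *ᵥ x) v = ∑ u ∈ G.neighborFinset v, (x v - x u) + W v * x v := by
  rw [hamiltonian, add_mulVec, Pi.add_apply, SimpleGraph.lapMatrix_mulVec_apply, mulVec_diagonal,
    Finset.sum_sub_distrib, Finset.sum_const, SimpleGraph.card_neighborFinset_eq_degree,
    nsmul_eq_mul]

lemma isHermitian_hamiltonian : (hamiltonian G W).IsHermitian :=
  (G.isHermitian_lapMatrix ℝ).add (isHermitian_diagonal W)

variable {G W} {ψ : V → ℝ}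

/-- With `W v = -(L ψ) v / ψ v`, the potential term cancels the diagonal of the Laplacian. -/
lemma mul_hamiltonian_mulVec_apply_of_mulVec_eq_zero (hψ : ∀ v, ψ v ≠ 0)
    (hHψ : hamiltonian G W *ᵥ ψ = 0) (x : V → ℝ) (v : V) :
    x v * (hamiltonian G W *ᵥ x) v
      = ∑ u ∈ G.neighborFinset v, (ψ u / ψ v * x v ^ 2 - x v * x u) := by
  have hWψ : W v * ψ v = -∑ u ∈ G.neighborFinset v, (ψ v - ψ u) := by
    have := congrFun hHψ v
    rw [hamiltonian_mulVec_apply, Pi.zero_apply] at this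
    linarith
  have hψv := hψ v
  calc x v * (hamiltonian G W *ᵥ x) v
      = ∑ u ∈ G.neighborFinset v, x v * (x v - x u) + x v ^ 2 / ψ v * (W v * ψ v) := by
        rw [hamiltonian_mulVec_apply, mul_add, Finset.mul_sum]
        field_simp
    _ = ∑ u ∈ G.neighborFinset v, (x v * (x v - x u) - x v ^ 2 / ψ v * (ψ v - ψ u)) := by
        rw [hWψ, mul_neg, Finset.mul_sum, ← sub_eq_add_neg, ← Finset.sum_sub_distrib]
    _ = _ := Finset.sum_congr rfl fun u _ => by field_simp; ring

lemma Finset.sum_sum_nonneg_of_add_swap_nonneg {ι : Type*} [Fintype ι] (g : ι → ι → ℝ)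
    (hg : ∀ i j, 0 ≤ g i j + g j i) : 0 ≤ ∑ i, ∑ j, g i j := by
  have h2 : 2 * ∑ i, ∑ j, g i j = ∑ i, ∑ j, (g i j + g j i) := by
    rw [two_mul]
    nth_rw 2 [Finset.sum_comm]
    simp only [Finset.sum_add_distrib]
  have := Finset.sum_nonneg fun i (_ : i ∈ Finset.univ) =>
    Finset.sum_nonneg fun j (_ : j ∈ Finset.univ) => hg i j
  linarith

lemma dotProduct_hamiltonian_mulVec_nonneg (hψ : ∀ v, 0 < ψ v)
    (hHψ : hamiltonian G W *ᵥ ψ = 0) (x : V → ℝ) :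
    0 ≤ x ⬝ᵥ (hamiltonian G W *ᵥ x) := by
  simp only [dotProduct, mul_hamiltonian_mulVec_apply_of_mulVec_eq_zero (fun v => (hψ v).ne') hHψ,
    SimpleGraph.neighborFinset_eq_filter, Finset.sum_filter]
  refine Finset.sum_sum_nonneg_of_add_swap_nonneg _ fun v u => ?_
  by_cases h : G.Adj v u
  · rw [if_pos h, if_pos h.symm]
    have hv := (hψ v).ne'
    have hu := (hψ u).ne'
    have hsq : ψ u / ψ v * x v ^ 2 - x v * x u + (ψ v / ψ u * x u ^ 2 - x u * x v)
        = (ψ u * x v - ψ v * x u) ^ 2 / (ψ v * ψ u) := by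
      field_simp
      ring
    rw [hsq]
    exact div_nonneg (sq_nonneg _) (mul_pos (hψ v) (hψ u)).le
  · rw [if_neg h, if_neg (mt G.adj_symm h), add_zero]

lemma posSemidef_hamiltonian (hψ : ∀ v, 0 < ψ v) (hHψ : hamiltonian G W *ᵥ ψ = 0) :
    (hamiltonian G W).PosSemidef :=
  posSemidef_iff_dotProduct_mulVec.mpr
    ⟨isHermitian_hamiltonian G W, dotProduct_hamiltonian_mulVec_nonneg hψ hHψ⟩

lemma isLeast_spectrum_hamiltonian [Nonempty V] (hψ : ∀ v, 0 < ψ v)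
    (hHψ : hamiltonian G W *ᵥ ψ = 0) :
    IsLeast (spectrum ℝ (hamiltonian G W)) 0 := by
  refine ⟨?_, fun μ hμ => (posSemidef_iff_isHermitian_and_spectrum_nonneg.mp
    (posSemidef_hamiltonian hψ hHψ)).2 hμ⟩
  have hψ0 : ψ ≠ 0 := fun h => (hψ (Classical.arbitrary V)).ne' (congrFun h _)
  have hdet : (hamiltonian G W).det = 0 := exists_mulVec_eq_zero_iff.mp ⟨ψ, hψ0, hHψ⟩
  rw [spectrum.zero_mem_iff, isUnit_iff_isUnit_det, hdet]
  exact not_isUnit_zero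

end GroundState

namespace Caterpillar

open Finset

/-- The mirror label of spine position `n`: `jB ℓ i = spineLabel ℓ i` and
`jC ℓ k = spineLabel ℓ (k + 1)`. -/
def spineLabel (ℓ n : ℕ) : ℕ := if n ≤ ℓ then n else 2 * ℓ - n

lemma spineLabel_eq {ℓ n j : ℕ} (h : n ≤ ℓ ∧ n = j ∨ ℓ < n ∧ 2 * ℓ - n = j) :
    spineLabel ℓ n = j := by
  unfold spineLabel; split_ifs <;> omega

lemma spineLabel_le (ℓ n : ℕ) : spineLabel ℓ n ≤ ℓ := by
  unfold spineLabel; split_ifs <;> omega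

lemma one_le_spineLabel {ℓ n : ℕ} (h1 : 1 ≤ n) (h2 : n < 2 * ℓ) :
    1 ≤ spineLabel ℓ n := by
  unfold spineLabel; split_ifs <;> omega

lemma spineLabel_pred_succ {ℓ n : ℕ} (h1 : 1 ≤ n) (h2 : n < 2 * ℓ) (hnℓ : n ≠ ℓ) :
    let j := spineLabel ℓ n
    (spineLabel ℓ (n + 1) = j + 1 ∧ spineLabel ℓ (n - 1) = j - 1) ∨
      (spineLabel ℓ (n + 1) = j - 1 ∧ spineLabel ℓ (n - 1) = j + 1) := by
  unfold spineLabel; split_ifs <;> omega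

noncomputable def spinePsi (j : ℕ) : ℝ := if j = 0 then 2/3 else (2/3 : ℝ) ^ j

noncomputable def legPsi (ℓ j : ℕ) : ℝ :=
  if j = 1 then (2/3) * (11/12 - 1/(8 * (ℓ : ℝ)))
  else if j = ℓ then (1/8) * (2/3 : ℝ) ^ ℓ
  else (2/3 - (j : ℝ) / (8 * (ℓ : ℝ))) * (2/3 : ℝ) ^ j

noncomputable def spineW (ℓ j : ℕ) : ℝ :=
  if j = 0 then 0 else -1/2 - (j : ℝ) / (4 * (ℓ : ℝ))

noncomputable def legW (ℓ j : ℕ) : ℝ :=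
  if j = 1 then 1 / (11/12 - 1/(8 * (ℓ : ℝ))) - 1
  else if j = ℓ then 7
  else 1 / (2/3 - (j : ℝ) / (8 * (ℓ : ℝ))) - 1

/-- Legs are indexed by the spine position `k + 1` they hang from. -/
def catFun (ℓ : ℕ) (s l : ℕ → ℝ) : CatV ℓ → ℝ
  | .inl i => s i
  | .inr (k, _) => l (k + 1)

lemma catPsi_eq (ℓ : ℕ) :
    catPsi ℓ = catFun ℓ (fun n => spinePsi (spineLabel ℓ n))
      (fun n => legPsi ℓ (spineLabel ℓ n)) := by
  funext v
  rcases v with i | ⟨k, t⟩ <;> rfl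

lemma catW_eq (ℓ : ℕ) :
    catW ℓ = catFun ℓ (fun n => spineW ℓ (spineLabel ℓ n))
      (fun n => legW ℓ (spineLabel ℓ n)) := by
  funext v
  rcases v with i | ⟨k, t⟩ <;> rfl

lemma const_sub_catFun (ℓ : ℕ) (c : ℝ) (s l : ℕ → ℝ) :
    (fun u => c - catFun ℓ s l u) = catFun ℓ (fun n => c - s n) (fun n => c - l n) := by
  funext v
  rcases v with i | ⟨k, t⟩ <;> rfl

lemma sum_fin_ite_val_eq {n : ℕ} (c : ℕ) (x : ℝ) :
    ∑ a : Fin n, (if (a : ℕ) = c then x else 0) = if c < n then x else 0 := by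
  rw [Fin.sum_univ_eq_sum_range (fun a => if a = c then x else 0)]
  simp

lemma sum_neighborFinset_inr (ℓ : ℕ) (s l : ℕ → ℝ) (k : Fin (2 * ℓ - 1)) (t : Bool) :
    ∑ u ∈ (catGraph ℓ).neighborFinset (.inr (k, t)), catFun ℓ s l u = s (k + 1) := by
  have hspine : ∀ a : Fin (2 * ℓ + 1),
      (if (catGraph ℓ).Adj (.inr (k, t)) (.inl a) then s a else 0)
        = if (a : ℕ) = k + 1 then s (k + 1) else 0 := by
    intro a
    show (if a.val = k.val + 1 then s a else 0) = _
    split_ifs with h <;> simp [h]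
  have hleg : ∀ b, ¬(catGraph ℓ).Adj (.inr (k, t)) (.inr b) := fun _ => id
  rw [SimpleGraph.neighborFinset_eq_filter, sum_filter, Fintype.sum_sum_type]
  simp only [hleg, if_false, sum_const_zero, add_zero, catFun, hspine, sum_fin_ite_val_eq]
  exact if_pos (by omega)

lemma sum_neighborFinset_inl (ℓ : ℕ) (s l : ℕ → ℝ) (i : Fin (2 * ℓ + 1)) :
    ∑ u ∈ (catGraph ℓ).neighborFinset (.inl i), catFun ℓ s l u
      = (if i.val + 1 ≤ 2 * ℓ then s (i + 1) else 0) + (if 1 ≤ i.val then s (i - 1) else 0)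
        + (if 1 ≤ i.val ∧ i.val < 2 * ℓ then 2 * l i else 0) := by
  have hspine : ∀ a : Fin (2 * ℓ + 1),
      (if (catGraph ℓ).Adj (.inl i) (.inl a) then s a else 0)
        = (if (a : ℕ) = i + 1 then s (i + 1) else 0)
          + (if (a : ℕ) = i - 1 then (if 1 ≤ i.val then s (i - 1) else 0) else 0) := by
    intro a
    show (if i.val + 1 = a.val ∨ a.val + 1 = i.val then s a else 0) = _
    split_ifs <;> first | omega | simp [*]
  have hleg : ∀ (a : Fin (2 * ℓ - 1)) (t : Bool),
      (if (catGraph ℓ).Adj (.inl i) (.inr (a, t)) then l (a + 1) else 0)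
        = if (a : ℕ) = i - 1 then (if 1 ≤ i.val then l i else 0) else 0 := by
    intro a t
    show (if i.val = a.val + 1 then l (a + 1) else 0) = _
    split_ifs <;> first | omega | rfl | (congr 1; omega)
  rw [SimpleGraph.neighborFinset_eq_filter, sum_filter, Fintype.sum_sum_type, Fintype.sum_prod_type]
  simp only [catFun, Fintype.sum_bool, hspine, hleg, sum_add_distrib, sum_fin_ite_val_eq]
  split_ifs <;> first | omega | ring

lemma spinePsi_pos (j : ℕ) : 0 < spinePsi j := by
  unfold spinePsi; split_ifs <;> positivity

lemma natCast_div_eight_mul_le {ℓ j : ℕ} (hj : j ≤ ℓ) :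
    (j : ℝ) / (8 * ℓ) ≤ 1 / 8 := by
  have : (j : ℝ) / ℓ ≤ 1 := div_le_one_of_le₀ (by exact_mod_cast hj) (by positivity)
  rw [mul_comm, ← div_div]
  linarith

lemma legPsi_pos {ℓ j : ℕ} (hj : j ≤ ℓ) : 0 < legPsi ℓ j := by
  have hfrac := natCast_div_eight_mul_le hj
  unfold legPsi
  split_ifs with h1
  · have := natCast_div_eight_mul_le (j := 1) (by omega : 1 ≤ ℓ)
    norm_num at this ⊢
    linarith
  · positivity
  · exact mul_pos (by linarith) (by positivity)

lemma catPsi_pos (ℓ : ℕ) (v : CatV ℓ) : 0 < catPsi ℓ v := by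
  rw [catPsi_eq]
  rcases v with i | ⟨k, t⟩
  exacts [spinePsi_pos _, legPsi_pos (spineLabel_le _ _)]

lemma spine_end_balance (ℓ : ℕ) :
    (spinePsi 0 - spinePsi 1) + spineW ℓ 0 * spinePsi 0 = 0 := by
  norm_num [spinePsi, spineW]

section Balance

variable {ℓ : ℕ} (hℓ : 2 ≤ ℓ)
include hℓ

lemma spine_balance {j : ℕ} (hj : 1 ≤ j) (hjℓ : j < ℓ) :
    (spinePsi j - spinePsi (j + 1)) + (spinePsi j - spinePsi (j - 1))
      + 2 * (spinePsi j - legPsi ℓ j) + spineW ℓ j * spinePsi j = 0 := by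
  have hℓ0 : (ℓ : ℝ) ≠ 0 := by positivity
  obtain rfl | ⟨m, rfl⟩ : j = 1 ∨ ∃ m, j = m + 2 := by
    rcases j with _ | _ | m <;> simp_all
  · simp only [spinePsi, spineW, legPsi]
    norm_num
    field_simp
    ring
  · simp only [spinePsi, spineW, legPsi, show m + 2 ≠ 1 by omega, show m + 2 ≠ ℓ by omega,
      show m + 2 + 1 ≠ 0 by omega, show m + 1 ≠ 0 by omega, show m + 2 ≠ 0 by omega,
      show m + 2 - 1 = m + 1 by omega, if_false, pow_succ]
    field_simp
    ring

lemma spine_center_balance :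
    (spinePsi ℓ - spinePsi (ℓ - 1)) + (spinePsi ℓ - spinePsi (ℓ - 1))
      + 2 * (spinePsi ℓ - legPsi ℓ ℓ) + spineW ℓ ℓ * spinePsi ℓ = 0 := by
  have hℓ0 : (ℓ : ℝ) ≠ 0 := by positivity
  obtain ⟨m, rfl⟩ : ∃ m, ℓ = m + 1 := ⟨ℓ - 1, by omega⟩
  simp only [spinePsi, spineW, legPsi, show m + 1 ≠ 0 by omega, show m ≠ 0 by omega,
    show m + 1 ≠ 1 by omega, show m + 1 - 1 = m by omega, if_false, if_true, pow_succ]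
  field_simp
  ring

lemma leg_balance {j : ℕ} (hj : 1 ≤ j) (hjℓ : j ≤ ℓ) :
    (legPsi ℓ j - spinePsi j) + legW ℓ j * legPsi ℓ j = 0 := by
  have hpos := legPsi_pos hjℓ
  unfold legPsi legW at *
  split_ifs at hpos ⊢ with h1 hℓj
  · have hd := right_ne_zero_of_mul hpos.ne'
    subst h1
    simp only [spinePsi, one_ne_zero, if_false, pow_one]
    generalize (11/12 - 1/(8 * (ℓ : ℝ))) = d at hd ⊢
    field_simp
    ring
  · subst hℓj
    simp only [spinePsi, show j ≠ 0 by omega, if_false]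
    ring
  · have hd := left_ne_zero_of_mul hpos.ne'
    simp only [spinePsi, show j ≠ 0 by omega, if_false]
    generalize (2/3 - (j : ℝ) / (8 * ℓ)) = d at hd ⊢
    field_simp
    ring

end Balance

variable {ℓ : ℕ} (hℓ : 2 ≤ ℓ)
include hℓ

lemma hamiltonian_mulVec_catPsi_inl (i : Fin (2 * ℓ + 1)) :
    (hamiltonian (catGraph ℓ) (catW ℓ) *ᵥ catPsi ℓ) (.inl i) = 0 := by
  rw [hamiltonian_mulVec_apply, catW_eq, catPsi_eq, const_sub_catFun, sum_neighborFinset_inl]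
  simp only [catFun]
  have hn := i.isLt
  generalize (i : ℕ) = n at hn ⊢
  obtain rfl | rfl | hnℓ | ⟨h1, h2, hnℓ⟩ :
      n = 0 ∨ n = 2 * ℓ ∨ n = ℓ ∨ (1 ≤ n ∧ n < 2 * ℓ ∧ n ≠ ℓ) := by omega
  · rw [if_pos (by omega), if_neg (by omega), if_neg (by omega),
      spineLabel_eq (n := 0) (j := 0) (by omega), spineLabel_eq (n := 0 + 1) (j := 1) (by omega)]
    linarith [spine_end_balance ℓ]
  · rw [if_neg (by omega), if_pos (by omega), if_neg (by omega),
      spineLabel_eq (n := 2 * ℓ) (j := 0) (by omega),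
      spineLabel_eq (n := 2 * ℓ - 1) (j := 1) (by omega)]
    linarith [spine_end_balance ℓ]
  · subst n
    rw [if_pos (by omega), if_pos (by omega), if_pos (by omega),
      spineLabel_eq (n := ℓ) (j := ℓ) (by omega),
      spineLabel_eq (n := ℓ + 1) (j := ℓ - 1) (by omega),
      spineLabel_eq (n := ℓ - 1) (j := ℓ - 1) (by omega)]
    linarith [spine_center_balance hℓ]
  · have hj := one_le_spineLabel h1 h2
    have hjℓ : spineLabel ℓ n < ℓ := by unfold spineLabel; split_ifs <;> omega
    rw [if_pos (by omega), if_pos (by omega), if_pos (by omega)]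
    rcases spineLabel_pred_succ h1 h2 hnℓ with ⟨hs, hp⟩ | ⟨hs, hp⟩ <;> rw [hs, hp] <;>
      linarith [spine_balance hℓ hj hjℓ]

lemma hamiltonian_mulVec_catPsi_inr (k : Fin (2 * ℓ - 1)) (t : Bool) :
    (hamiltonian (catGraph ℓ) (catW ℓ) *ᵥ catPsi ℓ) (.inr (k, t)) = 0 := by
  rw [hamiltonian_mulVec_apply, catW_eq, catPsi_eq, const_sub_catFun, sum_neighborFinset_inr]
  simp only [catFun]
  exact leg_balance hℓ (one_le_spineLabel (by omega) (by omega)) (spineLabel_le _ _)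

lemma hamiltonian_mulVec_catPsi : hamiltonian (catGraph ℓ) (catW ℓ) *ᵥ catPsi ℓ = 0 := by
  funext v
  rcases v with i | ⟨k, t⟩
  exacts [hamiltonian_mulVec_catPsi_inl hℓ i, hamiltonian_mulVec_catPsi_inr hℓ k t]

end Caterpillar

/-- `catPsi ℓ` is an eigenvector of `H_{G,W}` with eigenvalue zero, has all entries
positive, and hence is the ground state: `0` is the least point of the spectrum. -/
theorem stmt_3 (ℓ : ℕ) (hℓ : 2 ≤ ℓ) :
    (hamiltonian (catGraph ℓ) (catW ℓ)) *ᵥ (catPsi ℓ) = (0 : ℝ) • (catPsi ℓ) ∧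
      (∀ v, 0 < catPsi ℓ v) ∧
      IsLeast (spectrum ℝ (hamiltonian (catGraph ℓ) (catW ℓ))) 0 := by
  have hpos := Caterpillar.catPsi_pos ℓ
  have heig := Caterpillar.hamiltonian_mulVec_catPsi hℓ
  have : Nonempty (CatV ℓ) := ⟨.inl 0⟩
  exact ⟨by rw [heig, zero_smul], hpos, isLeast_spectrum_hamiltonian hpos heig⟩
end

section
/- Let G be a connected graph with max degree d_G and W a potential whose ground state ψ of H = L_G + diag(W) is single-peaked (the set of local maxima of ψ forms a connected vertex set). Then the spectral gap satisfies γ ≥ 1/(2(|W| + d_G)|V_G|²), where |W| = max W − min W. -/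
open Matrix

lemma hamiltonian_isHermitian {V : Type*} [Fintype V] [DecidableEq V]
    (G : SimpleGraph V) [DecidableRel G.Adj] (W : V → ℝ) :
    (hamiltonian G W).IsHermitian :=
  (SimpleGraph.posSemidef_lapMatrix ℝ G).isHermitian.add (Matrix.isHermitian_diagonal W)

noncomputable def sortedEigenvalues {n : Type*} [Fintype n] [DecidableEq n]
    {A : Matrix n n ℝ} (hA : A.IsHermitian) : Fin (Fintype.card n) → ℝ :=
  fun i =>
    let f : Fin (Fintype.card n) → ℝ := hA.eigenvalues ∘ (Fintype.equivFin n).symm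
    f (Tuple.sort f i)

/-- Gap between the two smallest eigenvalues, counted with multiplicity. -/
noncomputable def specGap {n : Type*} [Fintype n] [DecidableEq n]
    {A : Matrix n n ℝ} (hA : A.IsHermitian) : ℝ :=
  if h : 2 ≤ Fintype.card n then
    sortedEigenvalues hA ⟨1, by omega⟩ - sortedEigenvalues hA ⟨0, by omega⟩
  else 0

/-- `x` is a local maximum of `ψ`: `ψ x ≥ ψ y` for all neighbors `y`. -/
def IsGraphLocalMax {V : Type*} (G : SimpleGraph V) (ψ : V → ℝ) (x : V) : Prop :=
  ∀ y, G.Adj x y → ψ y ≤ ψ x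

/-- `ψ` is single-peaked: its set of local maxima is a connected set of vertices. -/
def SinglePeaked {V : Type*} (G : SimpleGraph V) (ψ : V → ℝ) : Prop :=
  (G.induce {x | IsGraphLocalMax G ψ x}).Connected

/-!
Write `f = g ψ`. The eigenvalue equation for `ψ` turns `⟪f, H f⟫ - E ‖f‖²` into half the
weighted Dirichlet energy `∑_{x ~ y} ψ x ψ y (g x - g y)²`. If `f ⊥ ψ`, then `2 ‖ψ‖² ‖f‖²` is the
`ψ²`-variance `∑_{x,y} ψ x² ψ y² (g x - g y)²`, and each of its terms is controlled by a canonical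
path from `x` to `y`: climbing from `x` and from `y` to local maxima and crossing the connected
set of local maxima (on which `ψ` is constant) gives a path on which `ψ ≥ min (ψ x) (ψ y)`, so
Cauchy–Schwarz along it yields `‖f‖² ≤ |V|² · energy`. Hence the Rayleigh quotient on `ψ^⊥` is
at least `E + 1 / (2 |V|²)`, which bounds the gap by min–max; this beats the claimed bound because
`max W - min W + d_G ≥ 1` on a connected graph with at least two vertices.
-/

open Finset

section Peaks

variable {V : Type*} {G : SimpleGraph V} {ψ : V → ℝ}

lemma IsGraphLocalMax.apply_eq_of_adj {x y : V} (hx : IsGraphLocalMax G ψ x)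
    (hy : IsGraphLocalMax G ψ y) (h : G.Adj x y) : ψ x = ψ y :=
  le_antisymm (hy x h.symm) (hx y h)

variable (G ψ) in
lemma exists_walk_to_isGraphLocalMax [Finite V] (x : V) :
    ∃ m, IsGraphLocalMax G ψ m ∧ ∃ q : G.Walk x m, ∀ v ∈ q.support, ψ x ≤ ψ v := by
  have : IsTrans V (fun a b => ψ b < ψ a) := ⟨fun _ _ _ h₁ h₂ => h₂.trans h₁⟩
  have : Std.Irrefl (fun a b : V => ψ b < ψ a) := ⟨fun _ => lt_irrefl _⟩
  induction x using (Finite.wellFounded_of_trans_of_irrefl (fun a b : V => ψ b < ψ a)).induction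
    with | _ x ih => ?_
  by_cases hx : IsGraphLocalMax G ψ x
  · exact ⟨x, hx, .nil, by simp⟩
  · obtain ⟨y, hxy, hlt⟩ : ∃ y, G.Adj x y ∧ ψ x < ψ y := by
      simpa [IsGraphLocalMax] using hx
    obtain ⟨m, hm, q, hq⟩ := ih y hlt
    refine ⟨m, hm, .cons hxy q, ?_⟩
    simp only [SimpleGraph.Walk.support_cons, List.mem_cons, forall_eq_or_imp, le_refl, true_and]
    exact fun v hv => hlt.le.trans (hq v hv)

lemma apply_eq_of_mem_support_induce_isGraphLocalMax {a b : {x | IsGraphLocalMax G ψ x}}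
    (w : (G.induce {x | IsGraphLocalMax G ψ x}).Walk a b) :
    ∀ v ∈ w.support, ψ v = ψ a := by
  induction w with
  | nil => simp
  | @cons u u' _ h q ih =>
    have hψ : ψ u = ψ u' := u.2.apply_eq_of_adj u'.2 h
    simpa [hψ] using ih

lemma SinglePeaked.exists_walk_apply_eq (hpeak : SinglePeaked G ψ) {a b : V}
    (ha : IsGraphLocalMax G ψ a) (hb : IsGraphLocalMax G ψ b) :
    ∃ r : G.Walk a b, ∀ v ∈ r.support, ψ v = ψ a := by
  obtain ⟨w⟩ := hpeak.preconnected ⟨a, ha⟩ ⟨b, hb⟩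
  refine ⟨w.map (SimpleGraph.Embedding.induce _).toHom, fun v hv => ?_⟩
  obtain ⟨v', hv', rfl⟩ := List.mem_map.mp ((SimpleGraph.Walk.support_map _ w) ▸ hv)
  exact apply_eq_of_mem_support_induce_isGraphLocalMax w v' hv'

lemma SinglePeaked.exists_isPath_min_le (hpeak : SinglePeaked G ψ) [Finite V] (x y : V) :
    ∃ p : G.Walk x y, p.IsPath ∧ ∀ v ∈ p.support, min (ψ x) (ψ y) ≤ ψ v := by
  classical
  obtain ⟨mx, hmx, qx, hqx⟩ := exists_walk_to_isGraphLocalMax G ψ x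
  obtain ⟨my, hmy, qy, hqy⟩ := exists_walk_to_isGraphLocalMax G ψ y
  obtain ⟨r, hr⟩ := hpeak.exists_walk_apply_eq hmx hmy
  have hx_mx : ψ x ≤ ψ mx := hqx mx qx.end_mem_support
  suffices h : ∀ v ∈ (qx.append (r.append qy.reverse)).support, min (ψ x) (ψ y) ≤ ψ v from
    ⟨_, SimpleGraph.Walk.bypass_isPath _,
      fun v hv => h v (SimpleGraph.Walk.support_bypass_subset_support _ hv)⟩
  intro v hv
  rw [SimpleGraph.Walk.mem_support_append_iff, SimpleGraph.Walk.mem_support_append_iff,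
    SimpleGraph.Walk.support_reverse, List.mem_reverse] at hv
  rcases hv with hv | hv | hv
  · exact (min_le_left _ _).trans (hqx v hv)
  · exact (min_le_left _ _).trans (hx_mx.trans (hr v hv).ge)
  · exact (min_le_right _ _).trans (hqy v hv)

end Peaks

section GroundState

variable {V : Type*} [Fintype V] (G : SimpleGraph V) [DecidableRel G.Adj]

def weightedEnergy (ψ g : V → ℝ) : ℝ :=
  ∑ x, ∑ y, if G.Adj x y then ψ x * ψ y * (g x - g y) ^ 2 else 0

variable {G}

lemma sum_sum_ite_adj_comm (F : V → V → ℝ) :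
    ∑ x, ∑ y, (if G.Adj x y then F x y else 0) = ∑ x, ∑ y, if G.Adj x y then F y x else 0 := by
  rw [sum_comm]
  simp_rw [G.adj_comm]

variable [DecidableEq V]

lemma hamiltonian_mulVec_mul_apply_sub (W ψ g : V → ℝ) (x : V) :
    (hamiltonian G W *ᵥ (g * ψ)) x - g x * (hamiltonian G W *ᵥ ψ) x =
      ∑ y, if G.Adj x y then ψ y * (g x - g y) else 0 := by
  simp only [hamiltonian, add_mulVec, Pi.add_apply, mulVec_diagonal,
    SimpleGraph.lapMatrix_mulVec_apply, Pi.mul_apply]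
  rw [← sum_filter, ← SimpleGraph.neighborFinset_eq_filter]
  have h : ∑ y ∈ G.neighborFinset x, ψ y * (g x - g y) =
      g x * ∑ y ∈ G.neighborFinset x, ψ y - ∑ y ∈ G.neighborFinset x, g y * ψ y := by
    rw [mul_sum, ← sum_sub_distrib]
    exact sum_congr rfl fun y _ => by ring
  rw [h]
  ring

theorem dotProduct_hamiltonian_mulVec_mul {W ψ : V → ℝ} {E : ℝ}
    (heig : hamiltonian G W *ᵥ ψ = E • ψ) (g : V → ℝ) :
    (g * ψ) ⬝ᵥ (hamiltonian G W *ᵥ (g * ψ)) =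
      E * ((g * ψ) ⬝ᵥ (g * ψ)) + weightedEnergy G ψ g / 2 := by
  have hT : (g * ψ) ⬝ᵥ (hamiltonian G W *ᵥ (g * ψ)) - E * ((g * ψ) ⬝ᵥ (g * ψ)) =
      ∑ x, ∑ y, if G.Adj x y then ψ x * ψ y * (g x * (g x - g y)) else 0 := by
    rw [dotProduct, dotProduct, mul_sum, ← sum_sub_distrib]
    refine sum_congr rfl fun x _ => ?_
    have h := hamiltonian_mulVec_mul_apply_sub (G := G) W ψ g x
    rw [heig, Pi.smul_apply, smul_eq_mul] at h
    calc _ = g x * ψ x * ((hamiltonian G W *ᵥ (g * ψ)) x - g x * (E * ψ x)) := by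
          simp only [Pi.mul_apply]; ring
      _ = _ := by
          rw [h, mul_sum]
          exact sum_congr rfl fun y _ => by split_ifs <;> ring
  have hsymm := sum_sum_ite_adj_comm (G := G) fun x y => ψ x * ψ y * (g x * (g x - g y))
  have hsplit : weightedEnergy G ψ g =
      (∑ x, ∑ y, if G.Adj x y then ψ x * ψ y * (g x * (g x - g y)) else 0) +
        ∑ x, ∑ y, if G.Adj x y then ψ y * ψ x * (g y * (g y - g x)) else 0 := by
    simp only [weightedEnergy, ← sum_add_distrib]
    exact sum_congr rfl fun x _ => sum_congr rfl fun y _ => by split_ifs <;> ring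
  linarith

end GroundState

namespace SimpleGraph.Walk

variable {V : Type*} {G : SimpleGraph V} {u v : V}

lemma sum_darts_sub (g : V → ℝ) (p : G.Walk u v) :
    (p.darts.map fun d => g d.fst - g d.snd).sum = g u - g v := by
  induction p with
  | nil => simp
  | cons h q ih =>
    rw [darts_cons, List.map_cons, List.sum_cons, ih]
    ring

lemma IsPath.sq_sub_le [DecidableEq V] {p : G.Walk u v} (hp : p.IsPath) (g : V → ℝ) :
    (g u - g v) ^ 2 ≤ p.length * ∑ d ∈ p.darts.toFinset, (g d.fst - g d.snd) ^ 2 := by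
  have hnodup := darts_nodup_of_support_nodup hp.support_nodup
  have hcard : p.darts.toFinset.card = p.length := by
    rw [List.toFinset_card_of_nodup hnodup, length_darts]
  rw [← sum_darts_sub g p, ← List.sum_toFinset _ hnodup, ← hcard]
  exact sq_sum_le_card_mul_sum_sq

lemma sum_darts_le_weightedEnergy [Fintype V] [DecidableRel G.Adj] [DecidableEq V]
    {ψ : V → ℝ} (hψ : ∀ x, 0 ≤ ψ x) (p : G.Walk u v) (g : V → ℝ) :
    ∑ d ∈ p.darts.toFinset, ψ d.fst * ψ d.snd * (g d.fst - g d.snd) ^ 2 ≤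
      weightedEnergy G ψ g := by
  set F : V × V → ℝ := fun q => if G.Adj q.1 q.2 then ψ q.1 * ψ q.2 * (g q.1 - g q.2) ^ 2 else 0
  have hF : ∀ q, 0 ≤ F q := fun q => by
    simp only [F]
    split_ifs
    · exact mul_nonneg (mul_nonneg (hψ _) (hψ _)) (sq_nonneg _)
    · exact le_rfl
  calc ∑ d ∈ p.darts.toFinset, ψ d.fst * ψ d.snd * (g d.fst - g d.snd) ^ 2
      = ∑ q ∈ p.darts.toFinset.map ⟨Dart.toProd, Dart.toProd_injective⟩, F q := by
        rw [Finset.sum_map]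
        exact Finset.sum_congr rfl fun d _ => (if_pos d.adj).symm
    _ ≤ ∑ q, F q := Finset.sum_le_univ_sum_of_nonneg hF
    _ = weightedEnergy G ψ g := Fintype.sum_prod_type F

end SimpleGraph.Walk

section Poincare

variable {V : Type*} [Fintype V] {G : SimpleGraph V} [DecidableRel G.Adj] {ψ : V → ℝ}

lemma sq_mul_sq_le_add_mul_min_sq (a b : ℝ) :
    a ^ 2 * b ^ 2 ≤ (a ^ 2 + b ^ 2) * min a b ^ 2 := by
  rcases le_total a b with h | h
  · rw [min_eq_left h]; nlinarith [sq_nonneg (a ^ 2)]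
  · rw [min_eq_right h]; nlinarith [sq_nonneg (b ^ 2)]

/-- On the path given by `exists_isPath_min_le` every edge weight `ψ u ψ v` is at least
`min (ψ x) (ψ y) ^ 2`. -/
lemma SinglePeaked.sq_mul_sq_mul_sq_sub_le (hpeak : SinglePeaked G ψ) (hψ : ∀ x, 0 < ψ x)
    (g : V → ℝ) (x y : V) :
    ψ x ^ 2 * ψ y ^ 2 * (g x - g y) ^ 2 ≤
      (ψ x ^ 2 + ψ y ^ 2) * Fintype.card V * weightedEnergy G ψ g := by
  classical
  obtain ⟨p, hp, hmin⟩ := hpeak.exists_isPath_min_le x y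
  set m := min (ψ x) (ψ y)
  have hm : 0 ≤ m := le_min (hψ x).le (hψ y).le
  have hdart : ∀ d ∈ p.darts.toFinset, m ^ 2 * (g d.fst - g d.snd) ^ 2 ≤
      ψ d.fst * ψ d.snd * (g d.fst - g d.snd) ^ 2 := fun d hd => by
    have hd := List.mem_toFinset.mp hd
    have h₁ := hmin _ (p.dart_fst_mem_support_of_mem_darts hd)
    have h₂ := hmin _ (p.dart_snd_mem_support_of_mem_darts hd)
    rw [sq m]
    exact mul_le_mul_of_nonneg_right (mul_le_mul h₁ h₂ hm (hm.trans h₁)) (sq_nonneg _)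
  calc ψ x ^ 2 * ψ y ^ 2 * (g x - g y) ^ 2
      ≤ (ψ x ^ 2 + ψ y ^ 2) * m ^ 2 * (g x - g y) ^ 2 :=
        mul_le_mul_of_nonneg_right (sq_mul_sq_le_add_mul_min_sq _ _) (sq_nonneg _)
    _ ≤ (ψ x ^ 2 + ψ y ^ 2) * m ^ 2 *
          (p.length * ∑ d ∈ p.darts.toFinset, (g d.fst - g d.snd) ^ 2) := by
        gcongr
        exact hp.sq_sub_le g
    _ = (ψ x ^ 2 + ψ y ^ 2) * p.length *
          ∑ d ∈ p.darts.toFinset, m ^ 2 * (g d.fst - g d.snd) ^ 2 := by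
        rw [← mul_sum]; ring
    _ ≤ (ψ x ^ 2 + ψ y ^ 2) * Fintype.card V * weightedEnergy G ψ g := by
        gcongr
        · exact_mod_cast hp.length_lt.le
        · exact (sum_le_sum hdart).trans
            (p.sum_darts_le_weightedEnergy (fun z => (hψ z).le) g)

lemma sum_sum_mul_mul_sq_sub (w g : V → ℝ) :
    ∑ x, ∑ y, w x * w y * (g x - g y) ^ 2 =
      2 * ((∑ x, w x) * ∑ x, w x * g x ^ 2 - (∑ x, w x * g x) ^ 2) := by
  have h : ∀ x y, w x * w y * (g x - g y) ^ 2 =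
      w y * (w x * g x ^ 2) + w x * (w y * g y ^ 2) - 2 * (w x * g x) * (w y * g y) :=
    fun x y => by ring
  simp only [h, sum_sub_distrib, sum_add_distrib, ← mul_sum, ← sum_mul]
  ring

theorem SinglePeaked.sum_sq_le_card_sq_mul_weightedEnergy (hpeak : SinglePeaked G ψ)
    (hψ : ∀ x, 0 < ψ x) (g : V → ℝ) (hg : ∑ x, g x * ψ x ^ 2 = 0) :
    ∑ x, (g x * ψ x) ^ 2 ≤ (Fintype.card V : ℝ) ^ 2 * weightedEnergy G ψ g := by
  set n : ℝ := (Fintype.card V : ℝ)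
  set Z := ∑ x, ψ x ^ 2
  obtain ⟨⟨x₀, -⟩⟩ := hpeak.nonempty
  have hZ : 0 < Z := sum_pos (fun x _ => pow_pos (hψ x) 2) ⟨x₀, mem_univ _⟩
  have hvar : ∑ x, ∑ y, ψ x ^ 2 * ψ y ^ 2 * (g x - g y) ^ 2 = 2 * Z * ∑ x, (g x * ψ x) ^ 2 := by
    rw [sum_sum_mul_mul_sq_sub, ← sum_congr rfl fun x _ => mul_comm (g x) (ψ x ^ 2), hg]
    simp only [mul_pow, mul_comm (g _ ^ 2)]
    ring
  have hpairs : ∑ x, ∑ y, (ψ x ^ 2 + ψ y ^ 2) * n * weightedEnergy G ψ g =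
      2 * Z * (n ^ 2 * weightedEnergy G ψ g) := by
    simp only [← sum_mul, sum_add_distrib, sum_const, card_univ, nsmul_eq_mul, ← mul_sum]
    ring
  have hsum := sum_le_sum fun x (_ : x ∈ univ) => sum_le_sum fun y (_ : y ∈ univ) =>
    hpeak.sq_mul_sq_mul_sq_sub_le hψ g x y
  rw [hvar, hpairs] at hsum
  exact le_of_mul_le_mul_left hsum (by positivity)

end Poincare

section Rayleigh

variable {V : Type*} [Fintype V] [DecidableEq V] {G : SimpleGraph V} [DecidableRel G.Adj]
  {W ψ : V → ℝ} {E : ℝ}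

theorem SinglePeaked.le_dotProduct_hamiltonian_mulVec (hpeak : SinglePeaked G ψ)
    (hψ : ∀ x, 0 < ψ x) (heig : hamiltonian G W *ᵥ ψ = E • ψ) (f : V → ℝ) (hf : f ⬝ᵥ ψ = 0) :
    (E + 1 / (2 * (Fintype.card V : ℝ) ^ 2)) * (f ⬝ᵥ f) ≤ f ⬝ᵥ (hamiltonian G W *ᵥ f) := by
  obtain ⟨⟨x₀, -⟩⟩ := hpeak.nonempty
  have hn : (0 : ℝ) < Fintype.card V := Nat.cast_pos.mpr (Fintype.card_pos_iff.mpr ⟨x₀⟩)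
  set g := f / ψ
  have hfg : g * ψ = f := funext fun x => div_mul_cancel₀ (f x) (hψ x).ne'
  have hg : ∑ x, g x * ψ x ^ 2 = 0 := by
    rw [← hf, dotProduct]
    exact Finset.sum_congr rfl fun x _ => by rw [sq, ← mul_assoc, ← Pi.mul_apply g ψ, hfg]
  have hpoinc := hpeak.sum_sq_le_card_sq_mul_weightedEnergy hψ g hg
  rw [← hfg, dotProduct_hamiltonian_mulVec_mul heig]
  have hff : (g * ψ) ⬝ᵥ (g * ψ) = ∑ x, (g x * ψ x) ^ 2 := by
    simp only [dotProduct, Pi.mul_apply, sq]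
  rw [hff, add_mul]
  gcongr
  rw [div_mul_eq_mul_div, one_mul, div_le_div_iff₀ (by positivity) two_pos]
  linarith

end Rayleigh

namespace Matrix.IsHermitian

variable {n : Type*} [Fintype n] [DecidableEq n] {A : Matrix n n ℝ} (hA : A.IsHermitian)

noncomputable def sortedEigenvalueIndex : Fin (Fintype.card n) ≃ n :=
  (Tuple.sort (hA.eigenvalues ∘ (Fintype.equivFin n).symm)).trans (Fintype.equivFin n).symm

lemma sortedEigenvalues_eq (i : Fin (Fintype.card n)) :
    sortedEigenvalues hA i = hA.eigenvalues (hA.sortedEigenvalueIndex i) :=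
  rfl

lemma sortedEigenvalues_monotone : Monotone (sortedEigenvalues hA) :=
  Tuple.monotone_sort (hA.eigenvalues ∘ (Fintype.equivFin n).symm)

lemma sortedEigenvalues_zero_eq {E : ℝ} (hE : IsLeast (spectrum ℝ A) E)
    (h : 0 < Fintype.card n) : sortedEigenvalues hA ⟨0, h⟩ = E := by
  refine le_antisymm ?_ (hE.2 (hA.eigenvalues_mem_spectrum_real _))
  obtain ⟨j, hj⟩ := hA.spectrum_real_eq_range_eigenvalues ▸ hE.1
  rw [← hj, ← hA.sortedEigenvalueIndex.apply_symm_apply j, ← sortedEigenvalues_eq]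
  exact hA.sortedEigenvalues_monotone (Nat.zero_le _)

lemma dotProduct_eigenvectorBasis (i j : n) :
    ⇑(hA.eigenvectorBasis i) ⬝ᵥ ⇑(hA.eigenvectorBasis j) = if i = j then 1 else 0 := by
  have h := orthonormal_iff_ite.mp hA.eigenvectorBasis.orthonormal i j
  simpa [PiLp.inner_apply, dotProduct, mul_comm] using h

lemma dotProduct_mulVec_add_eigenvectorBasis {i j : n} (hij : i ≠ j) (s t : ℝ) :
    (s • ⇑(hA.eigenvectorBasis i) + t • ⇑(hA.eigenvectorBasis j)) ⬝ᵥ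
        (A *ᵥ (s • ⇑(hA.eigenvectorBasis i) + t • ⇑(hA.eigenvectorBasis j))) =
      hA.eigenvalues i * s ^ 2 + hA.eigenvalues j * t ^ 2 := by
  simp only [mulVec_add, mulVec_smul, mulVec_eigenvectorBasis, add_dotProduct, dotProduct_add,
    smul_dotProduct, dotProduct_smul, dotProduct_eigenvectorBasis, if_neg hij, if_neg hij.symm,
    if_pos, smul_eq_mul]
  ring

lemma dotProduct_self_add_eigenvectorBasis {i j : n} (hij : i ≠ j) (s t : ℝ) :
    (s • ⇑(hA.eigenvectorBasis i) + t • ⇑(hA.eigenvectorBasis j)) ⬝ᵥ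
        (s • ⇑(hA.eigenvectorBasis i) + t • ⇑(hA.eigenvectorBasis j)) = s ^ 2 + t ^ 2 := by
  simp only [add_dotProduct, dotProduct_add, smul_dotProduct, dotProduct_smul,
    dotProduct_eigenvectorBasis, if_neg hij, if_neg hij.symm, if_pos, smul_eq_mul]
  ring

/-- Min–max for the second eigenvalue: some combination of the first two eigenvectors is
orthogonal to `ψ`. -/
theorem le_specGap (hcard : 2 ≤ Fintype.card n) {E c : ℝ} (hE : IsLeast (spectrum ℝ A) E)
    (ψ : n → ℝ) (hψ : ∀ f, f ⬝ᵥ ψ = 0 → (E + c) * (f ⬝ᵥ f) ≤ f ⬝ᵥ (A *ᵥ f)) :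
    c ≤ specGap hA := by
  set i₀ : Fin (Fintype.card n) := ⟨0, by omega⟩
  set i₁ : Fin (Fintype.card n) := ⟨1, by omega⟩
  have hbottom : sortedEigenvalues hA i₀ = E := hA.sortedEigenvalues_zero_eq hE _
  have hmono : sortedEigenvalues hA i₀ ≤ sortedEigenvalues hA i₁ :=
    hA.sortedEigenvalues_monotone (Nat.zero_le _)
  have hne : hA.sortedEigenvalueIndex i₀ ≠ hA.sortedEigenvalueIndex i₁ :=
    hA.sortedEigenvalueIndex.injective.ne (by simp [i₀, i₁])
  set φ₀ := ⇑(hA.eigenvectorBasis (hA.sortedEigenvalueIndex i₀))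
  set φ₁ := ⇑(hA.eigenvectorBasis (hA.sortedEigenvalueIndex i₁))
  obtain ⟨s, t, hst, horth⟩ : ∃ s t : ℝ, 0 < s ^ 2 + t ^ 2 ∧
      s * (φ₀ ⬝ᵥ ψ) + t * (φ₁ ⬝ᵥ ψ) = 0 := by
    by_cases hb : φ₁ ⬝ᵥ ψ = 0
    · exact ⟨0, 1, by norm_num, by simp [hb]⟩
    · exact ⟨φ₁ ⬝ᵥ ψ, -(φ₀ ⬝ᵥ ψ), by positivity, by ring⟩
  have h := hψ (s • φ₀ + t • φ₁) (by simpa [add_dotProduct, smul_dotProduct] using horth)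
  rw [hA.dotProduct_mulVec_add_eigenvectorBasis hne, hA.dotProduct_self_add_eigenvectorBasis hne,
    ← sortedEigenvalues_eq, ← sortedEigenvalues_eq] at h
  have hgap : specGap hA = sortedEigenvalues hA i₁ - sortedEigenvalues hA i₀ := dif_pos hcard
  have : E + c ≤ sortedEigenvalues hA i₁ := by
    refine le_of_mul_le_mul_right ?_ hst
    nlinarith
  linarith

end Matrix.IsHermitian

/-- If the ground state of `H = L_G + diag W` on a connected graph is single-peaked,
then the spectral gap satisfies `γ ≥ 1/(2(|W| + d_G)|V_G|²)`,
where `|W| = max W − min W`. -/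
theorem stmt_9 {V : Type*} [Fintype V] [DecidableEq V]
    (G : SimpleGraph V) [DecidableRel G.Adj] (hG : G.Connected)
    (hcard : 2 ≤ Fintype.card V) (W : V → ℝ)
    (ψ : V → ℝ) (hψpos : ∀ x, 0 < ψ x) (E : ℝ)
    (hground : IsLeast (spectrum ℝ (hamiltonian G W)) E)
    (heig : (hamiltonian G W) *ᵥ ψ = E • ψ)
    (hpeak : SinglePeaked G ψ) :
    specGap (hamiltonian_isHermitian G W) ≥
      1 / (2 * ((⨆ x, W x) - (⨅ x, W x) + (G.maxDegree : ℝ)) *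
        (Fintype.card V : ℝ) ^ 2) := by
  have : Nontrivial V := Fintype.one_lt_card_iff_nontrivial.mp hcard
  obtain ⟨x₀⟩ := hG.nonempty
  have hdeg : (1 : ℝ) ≤ G.maxDegree := by
    exact_mod_cast (hG.preconnected.degree_pos_of_nontrivial x₀).trans_le (G.degree_le_maxDegree x₀)
  have hW : (⨅ x, W x) ≤ ⨆ x, W x :=
    ciInf_le_ciSup (Set.finite_range W).bddBelow (Set.finite_range W).bddAbove
  have hgap := (hamiltonian_isHermitian G W).le_specGap hcard hground ψ
    (hpeak.le_dotProduct_hamiltonian_mulVec hψpos heig)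
  refine le_trans ?_ hgap
  gcongr
  linarith
end

section
/- Let W be a single-basin potential on the path graph on ℓ vertices, and let ψ > 0 be the ground state of H = L + diag(W). Then ψ has exactly one local maximum; i.e., ψ is unimodal on {1,…,ℓ}. -/
open Matrix

noncomputable instance (n : ℕ) : DecidableRel (SimpleGraph.pathGraph n).Adj :=
  Classical.decRel _

def ConnInG {V : Type*} (G : SimpleGraph V) (S : Set V) : Prop :=
  (G.induce S).Preconnected

/-- `W` is a single-basin potential: every sublevel set `{x | W x < E}` is connected. -/
def SingleBasin {V : Type*} (G : SimpleGraph V) (W : V → ℝ) : Prop :=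
  ∀ E : ℝ, ConnInG G {x | W x < E}

/- ### Auxiliary lemmas -/

lemma walk_between_aux {ℓ : ℕ} {S : Set (Fin ℓ)} :
    ∀ {u v : S} (_ : ((SimpleGraph.pathGraph ℓ).induce S).Walk u v) (b : Fin ℓ),
      ((u : Fin ℓ).val ≤ b.val ∧ b.val ≤ (v : Fin ℓ).val) ∨
      ((v : Fin ℓ).val ≤ b.val ∧ b.val ≤ (u : Fin ℓ).val) → b ∈ S := by
  intro u v w
  induction w with
  | nil =>
    rename_i x
    intro b hb
    have : b = (x : Fin ℓ) := Fin.ext (by omega)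
    exact this ▸ x.2
  | @cons x y z h p ih =>
    intro b hb
    have hadj : (SimpleGraph.pathGraph ℓ).Adj x y := h
    rw [SimpleGraph.pathGraph_adj] at hadj
    by_cases hbu : b.val = (x : Fin ℓ).val
    · have : b = (x : Fin ℓ) := Fin.ext hbu
      exact this ▸ x.2
    · exact ih b (by omega)

lemma interval_mem_aux {ℓ : ℕ} {S : Set (Fin ℓ)} (hS : ConnInG (SimpleGraph.pathGraph ℓ) S)
    {a b c : Fin ℓ} (ha : a ∈ S) (hc : c ∈ S) (hab : a ≤ b) (hbc : b ≤ c) : b ∈ S := by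
  obtain ⟨w⟩ := hS ⟨a, ha⟩ ⟨c, hc⟩
  exact walk_between_aux w b (Or.inl ⟨hab, hbc⟩)

lemma sum_single_val_aux {ℓ : ℕ} (f : Fin ℓ → ℝ) (c : ℕ) :
    ∑ y : Fin ℓ, (if y.val = c then f y else 0) = if h : c < ℓ then f ⟨c, h⟩ else 0 := by
  by_cases h : c < ℓ
  · rw [dif_pos h]
    rw [show (fun y : Fin ℓ => if y.val = c then f y else 0)
        = (fun y : Fin ℓ => if y = ⟨c, h⟩ then f y else 0) by
      funext y; congr 1; simp [Fin.ext_iff]]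
    simp
  · rw [dif_neg h]
    exact Finset.sum_eq_zero (fun y _ => by rw [if_neg (by omega)])

lemma sum_adj_aux {ℓ : ℕ} (x : Fin ℓ) (f : Fin ℓ → ℝ) :
    ∑ y : Fin ℓ, (if (SimpleGraph.pathGraph ℓ).Adj x y then f y else 0)
      = (if h : x.val + 1 < ℓ then f ⟨x.val + 1, h⟩ else 0)
        + (if h : 0 < x.val then f ⟨x.val - 1, by omega⟩ else 0) := by
  have hsplit : ∀ y : Fin ℓ, (if (SimpleGraph.pathGraph ℓ).Adj x y then f y else 0)
      = (if y.val = x.val + 1 then f y else 0)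
        + (if 0 < x.val ∧ y.val = x.val - 1 then f y else 0) := by
    intro y
    simp only [SimpleGraph.pathGraph_adj]
    by_cases h1 : y.val = x.val + 1
    · rw [if_pos (Or.inl (by omega)), if_pos h1, if_neg (by omega), add_zero]
    · by_cases h2 : 0 < x.val ∧ y.val = x.val - 1
      · rw [if_pos (Or.inr (by omega)), if_neg h1, if_pos h2, zero_add]
      · rw [if_neg (by omega), if_neg h1, if_neg h2, add_zero]
  rw [Finset.sum_congr rfl (fun y _ => hsplit y), Finset.sum_add_distrib]
  congr 1
  · exact sum_single_val_aux f (x.val + 1)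
  · by_cases h : 0 < x.val
    · rw [dif_pos h]
      rw [show (fun y : Fin ℓ => if 0 < x.val ∧ y.val = x.val - 1 then f y else 0)
          = (fun y : Fin ℓ => if y.val = x.val - 1 then f y else 0) by
        funext y; by_cases hy : y.val = x.val - 1 <;> simp [hy, h]]
      rw [sum_single_val_aux f (x.val - 1), dif_pos (by omega)]
    · rw [dif_neg h]
      exact Finset.sum_eq_zero (fun y _ => by rw [if_neg (by omega)])

lemma key_rec_aux {ℓ : ℕ} (W : Fin ℓ → ℝ) (ψ : Fin ℓ → ℝ) (E₀ : ℝ)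
    (heig : (hamiltonian (SimpleGraph.pathGraph ℓ) W) *ᵥ ψ = E₀ • ψ)
    (k : ℕ) (hk : k < ℓ) :
    (if h : k + 1 < ℓ then ψ ⟨k + 1, h⟩ - ψ ⟨k, hk⟩ else 0)
      = (if h : 0 < k then ψ ⟨k, hk⟩ - ψ ⟨k - 1, by omega⟩ else 0)
        + (W ⟨k, hk⟩ - E₀) * ψ ⟨k, hk⟩ := by
  set G := SimpleGraph.pathGraph ℓ with hG
  set x : Fin ℓ := ⟨k, hk⟩ with hx
  have h1 := congrFun heig x
  rw [hamiltonian, add_mulVec, Pi.add_apply, SimpleGraph.lapMatrix_mulVec_apply,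
    mulVec_diagonal, Pi.smul_apply, smul_eq_mul] at h1
  have hdeg : (G.degree x : ℝ) * ψ x - ∑ u ∈ G.neighborFinset x, ψ u
      = ∑ u ∈ G.neighborFinset x, (ψ x - ψ u) := by
    rw [Finset.sum_sub_distrib, Finset.sum_const, ← SimpleGraph.card_neighborFinset_eq_degree,
      nsmul_eq_mul]
  rw [hdeg, SimpleGraph.neighborFinset_eq_filter, Finset.sum_filter] at h1
  rw [sum_adj_aux x (fun y => ψ x - ψ y)] at h1
  by_cases ha : k + 1 < ℓ <;> by_cases hb : 0 < k
  · rw [dif_pos ha, dif_pos hb] at h1 ⊢; push_cast at h1 ⊢; linarith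
  · rw [dif_pos ha, dif_neg hb] at h1 ⊢; push_cast at h1 ⊢; linarith
  · rw [dif_neg ha, dif_pos hb] at h1 ⊢; push_cast at h1 ⊢; linarith
  · rw [dif_neg ha, dif_neg hb] at h1 ⊢; linarith

/-- Extended forward difference `Dfun k = ψ k - ψ (k-1)` (zero at/outside the boundary). -/
noncomputable def Dfun (ℓ : ℕ) (ψ : Fin ℓ → ℝ) (k : ℕ) : ℝ :=
  if h : 0 < k ∧ k < ℓ then ψ ⟨k, h.2⟩ - ψ ⟨k - 1, by omega⟩ else 0

/-- Extended source term `(W k - E₀) * ψ k`. -/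
noncomputable def cfun (ℓ : ℕ) (W ψ : Fin ℓ → ℝ) (E₀ : ℝ) (k : ℕ) : ℝ :=
  if h : k < ℓ then (W ⟨k, h⟩ - E₀) * ψ ⟨k, h⟩ else 0

lemma Dfun_eq' {ℓ : ℕ} (ψ : Fin ℓ → ℝ) (k : ℕ) (hk : k + 1 < ℓ) :
    Dfun ℓ ψ (k + 1) = ψ ⟨k + 1, hk⟩ - ψ ⟨k, by omega⟩ := by
  simp only [Dfun]
  rw [dif_pos ⟨Nat.succ_pos k, hk⟩]
  rfl

lemma Dfun_zero_of_ge {ℓ : ℕ} (ψ : Fin ℓ → ℝ) (k : ℕ) (hk : ℓ ≤ k) :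
    Dfun ℓ ψ k = 0 := by
  simp only [Dfun]
  rw [dif_neg (by omega)]

lemma Dfun_succ {ℓ : ℕ} (W : Fin ℓ → ℝ) (ψ : Fin ℓ → ℝ) (E₀ : ℝ)
    (heig : (hamiltonian (SimpleGraph.pathGraph ℓ) W) *ᵥ ψ = E₀ • ψ) (k : ℕ) :
    Dfun ℓ ψ (k + 1) = Dfun ℓ ψ k + cfun ℓ W ψ E₀ k := by
  by_cases hk : k < ℓ
  · have hkey := key_rec_aux W ψ E₀ heig k hk
    have hc : cfun ℓ W ψ E₀ k = (W ⟨k, hk⟩ - E₀) * ψ ⟨k, hk⟩ := by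
      simp only [cfun]; rw [dif_pos hk]
    have hDk : Dfun ℓ ψ k = if h : 0 < k then ψ ⟨k, hk⟩ - ψ ⟨k - 1, by omega⟩ else 0 := by
      by_cases h : 0 < k
      · simp only [Dfun]; rw [dif_pos ⟨h, hk⟩, dif_pos h]
      · simp only [Dfun]; rw [dif_neg (by omega), dif_neg h]
    have hDk1 : Dfun ℓ ψ (k + 1)
        = if h : k + 1 < ℓ then ψ ⟨k + 1, h⟩ - ψ ⟨k, hk⟩ else 0 := by
      by_cases h : k + 1 < ℓ
      · rw [Dfun_eq' ψ k h, dif_pos h]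
      · rw [Dfun_zero_of_ge ψ (k + 1) (by omega), dif_neg h]
    rw [hDk1, hDk, hc, hkey]
  · rw [Dfun_zero_of_ge ψ (k + 1) (by omega), Dfun_zero_of_ge ψ k (by omega)]
    simp only [cfun]
    rw [dif_neg hk]
    ring

lemma Dfun_eq_sum {ℓ : ℕ} (W : Fin ℓ → ℝ) (ψ : Fin ℓ → ℝ) (E₀ : ℝ)
    (heig : (hamiltonian (SimpleGraph.pathGraph ℓ) W) *ᵥ ψ = E₀ • ψ) (k : ℕ) :
    Dfun ℓ ψ k = ∑ x ∈ Finset.range k, cfun ℓ W ψ E₀ x := by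
  induction k with
  | zero =>
    simp only [Dfun]
    rw [dif_neg (by omega), Finset.range_zero, Finset.sum_empty]
  | succ k ih =>
    rw [Dfun_succ W ψ E₀ heig k, Finset.sum_range_succ, ih]

lemma cfun_neg_aux {ℓ : ℕ} (W ψ : Fin ℓ → ℝ) (E₀ : ℝ) (hψpos : ∀ x, 0 < ψ x)
    (x : ℕ) (hx : x < ℓ) (h : cfun ℓ W ψ E₀ x < 0) : W ⟨x, hx⟩ < E₀ := by
  simp only [cfun] at h
  rw [dif_pos hx] at h
  nlinarith [hψpos ⟨x, hx⟩]

lemma cfun_pos_aux {ℓ : ℕ} (W ψ : Fin ℓ → ℝ) (E₀ : ℝ) (hψpos : ∀ x, 0 < ψ x)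
    (x : ℕ) (hx : x < ℓ) (h : 0 < cfun ℓ W ψ E₀ x) : E₀ < W ⟨x, hx⟩ := by
  simp only [cfun] at h
  rw [dif_pos hx] at h
  nlinarith [hψpos ⟨x, hx⟩]

lemma cfun_zero_aux {ℓ : ℕ} (W ψ : Fin ℓ → ℝ) (E₀ : ℝ) (x : ℕ) (hx : ℓ ≤ x) :
    cfun ℓ W ψ E₀ x = 0 := by
  simp only [cfun]
  rw [dif_neg (by omega)]

lemma chain_up_aux {ℓ : ℕ} (ψ : Fin ℓ → ℝ) :
    ∀ (n i : ℕ) (hi : i < ℓ) (hj : i + n < ℓ),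
      (∀ k, i ≤ k → k < i + n → 0 ≤ Dfun ℓ ψ (k + 1)) → ψ ⟨i, hi⟩ ≤ ψ ⟨i + n, hj⟩ := by
  intro n
  induction n with
  | zero => intro i hi hj _; exact le_refl _
  | succ n ih =>
    intro i hi hj hpos
    have h1 : ψ ⟨i, hi⟩ ≤ ψ ⟨i + n, by omega⟩ :=
      ih i hi (by omega) (fun k hk1 hk2 => hpos k hk1 (by omega))
    have h2 : 0 ≤ Dfun ℓ ψ (i + n + 1) := hpos (i + n) (by omega) (by omega)
    have hD : Dfun ℓ ψ (i + n + 1) = ψ ⟨i + n + 1, by omega⟩ - ψ ⟨i + n, by omega⟩ :=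
      Dfun_eq' ψ (i + n) (by omega)
    show ψ ⟨i, hi⟩ ≤ ψ ⟨i + n + 1, by omega⟩
    linarith

lemma chain_down_aux {ℓ : ℕ} (ψ : Fin ℓ → ℝ) :
    ∀ (n i : ℕ) (hi : i < ℓ) (hj : i + n < ℓ),
      (∀ k, i ≤ k → k < i + n → Dfun ℓ ψ (k + 1) ≤ 0) → ψ ⟨i + n, hj⟩ ≤ ψ ⟨i, hi⟩ := by
  intro n
  induction n with
  | zero => intro i hi hj _; exact le_refl _
  | succ n ih =>
    intro i hi hj hneg
    have h1 : ψ ⟨i + n, by omega⟩ ≤ ψ ⟨i, hi⟩ :=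
      ih i hi (by omega) (fun k hk1 hk2 => hneg k hk1 (by omega))
    have h2 : Dfun ℓ ψ (i + n + 1) ≤ 0 := hneg (i + n) (by omega) (by omega)
    have hD : Dfun ℓ ψ (i + n + 1) = ψ ⟨i + n + 1, by omega⟩ - ψ ⟨i + n, by omega⟩ :=
      Dfun_eq' ψ (i + n) (by omega)
    show ψ ⟨i + n + 1, by omega⟩ ≤ ψ ⟨i, hi⟩
    linarith

/-- For a single-basin potential on the path graph on `ℓ` vertices, the positive
ground state `ψ` of `H = L + diag W` is unimodal: it is nondecreasing up to some
vertex `m` and nonincreasing afterwards. -/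
theorem stmt_11 (ℓ : ℕ) (hℓ : 1 ≤ ℓ) (W : Fin ℓ → ℝ)
    (hbasin : SingleBasin (SimpleGraph.pathGraph ℓ) W)
    (ψ : Fin ℓ → ℝ) (hψpos : ∀ x, 0 < ψ x) (E₀ : ℝ)
    (hground : IsLeast (spectrum ℝ (hamiltonian (SimpleGraph.pathGraph ℓ) W)) E₀)
    (heig : (hamiltonian (SimpleGraph.pathGraph ℓ) W) *ᵥ ψ = E₀ • ψ) :
    ∃ m : Fin ℓ, (∀ i j : Fin ℓ, i ≤ j → j ≤ m → ψ i ≤ ψ j) ∧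
      (∀ i j : Fin ℓ, m ≤ i → i ≤ j → ψ j ≤ ψ i) := by
  have hsum : ∀ k, Dfun ℓ ψ k = ∑ x ∈ Finset.range k, cfun ℓ W ψ E₀ x :=
    Dfun_eq_sum W ψ E₀ heig
  have hDzero : ∀ k, ℓ ≤ k → Dfun ℓ ψ k = 0 := fun k hk => Dfun_zero_of_ge ψ k hk
  -- no valley: D cannot go from negative to positive
  have noValley : ∀ a b : ℕ, a ≤ b → Dfun ℓ ψ a < 0 → 0 < Dfun ℓ ψ b → False := by
    intro a b hab hDa hDb
    have hbl : b < ℓ := by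
      by_contra h
      rw [hDzero b (by omega)] at hDb
      linarith
    have h0 : ∃ x ∈ Finset.range a, cfun ℓ W ψ E₀ x < 0 := by
      by_contra h
      push_neg at h
      have : 0 ≤ Dfun ℓ ψ a := (hsum a) ▸ Finset.sum_nonneg (fun x hx => h x hx)
      linarith
    obtain ⟨x₀, hx₀r, hx₀⟩ := h0
    have h1 : ∃ x ∈ Finset.Ico a b, 0 < cfun ℓ W ψ E₀ x := by
      by_contra h
      push_neg at h
      have hle : ∑ x ∈ Finset.Ico a b, cfun ℓ W ψ E₀ x ≤ 0 := Finset.sum_nonpos h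
      have hd : Dfun ℓ ψ b - Dfun ℓ ψ a = ∑ x ∈ Finset.Ico a b, cfun ℓ W ψ E₀ x := by
        rw [hsum a, hsum b, Finset.sum_Ico_eq_sub _ hab]
      linarith
    obtain ⟨x₁, hx₁r, hx₁⟩ := h1
    have h2 : ∃ x ∈ Finset.Ico b ℓ, cfun ℓ W ψ E₀ x < 0 := by
      by_contra h
      push_neg at h
      have hle : 0 ≤ ∑ x ∈ Finset.Ico b ℓ, cfun ℓ W ψ E₀ x := Finset.sum_nonneg h
      have hd : Dfun ℓ ψ ℓ - Dfun ℓ ψ b = ∑ x ∈ Finset.Ico b ℓ, cfun ℓ W ψ E₀ x := by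
        rw [hsum b, hsum ℓ, Finset.sum_Ico_eq_sub _ (le_of_lt hbl)]
      have hDl : Dfun ℓ ψ ℓ = 0 := hDzero ℓ le_rfl
      linarith
    obtain ⟨x₂, hx₂r, hx₂⟩ := h2
    rw [Finset.mem_range] at hx₀r
    rw [Finset.mem_Ico] at hx₁r hx₂r
    have hx₀l : x₀ < ℓ := by
      by_contra h
      rw [cfun_zero_aux W ψ E₀ x₀ (by omega)] at hx₀
      linarith
    have hx₁l : x₁ < ℓ := by omega
    have hx₂l : x₂ < ℓ := hx₂r.2
    have w0 : W ⟨x₀, hx₀l⟩ < E₀ := cfun_neg_aux W ψ E₀ hψpos x₀ hx₀l hx₀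
    have w1 : E₀ < W ⟨x₁, hx₁l⟩ := cfun_pos_aux W ψ E₀ hψpos x₁ hx₁l hx₁
    have w2 : W ⟨x₂, hx₂l⟩ < E₀ := cfun_neg_aux W ψ E₀ hψpos x₂ hx₂l hx₂
    have hmem : (⟨x₁, hx₁l⟩ : Fin ℓ) ∈ {x : Fin ℓ | W x < E₀} := by
      refine interval_mem_aux (hbasin E₀) (a := ⟨x₀, hx₀l⟩) (c := ⟨x₂, hx₂l⟩) w0 w2 ?_ ?_
      · exact Fin.mk_le_mk.mpr (by omega)
      · exact Fin.mk_le_mk.mpr (by omega)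
    have : W ⟨x₁, hx₁l⟩ < E₀ := hmem
    linarith
  by_cases hex : ∃ k, Dfun ℓ ψ (k + 1) < 0
  · -- first descent
    let m₀ := Nat.find hex
    have hm : Dfun ℓ ψ (m₀ + 1) < 0 := Nat.find_spec hex
    have hmin : ∀ k, k < m₀ → ¬ Dfun ℓ ψ (k + 1) < 0 := fun k hk => Nat.find_min hex hk
    have hm₀l : m₀ + 1 < ℓ := by
      by_contra h
      rw [hDzero (m₀ + 1) (by omega)] at hm
      linarith
    refine ⟨⟨m₀, by omega⟩, ?_, ?_⟩
    · intro i j hij hjm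
      have hij' : i.val ≤ j.val := hij
      have hjm' : j.val ≤ m₀ := hjm
      have key := chain_up_aux ψ (j.val - i.val) i.val i.isLt (by omega)
        (fun k hk1 hk2 => by
          have hkm : k < m₀ := by omega
          linarith [not_lt.mp (hmin k hkm)])
      have heq : (⟨i.val + (j.val - i.val), by omega⟩ : Fin ℓ) = j :=
        Fin.ext (by show i.val + (j.val - i.val) = j.val; omega)
      have heq2 : (⟨i.val, i.isLt⟩ : Fin ℓ) = i := Fin.ext rfl
      rw [heq, heq2] at key
      exact key
    · intro i j hmi hij
      have hmi' : m₀ ≤ i.val := hmi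
      have hij' : i.val ≤ j.val := hij
      have hDneg : ∀ k, m₀ ≤ k → Dfun ℓ ψ (k + 1) ≤ 0 := by
        intro k hk
        by_contra h
        push_neg at h
        exact noValley (m₀ + 1) (k + 1) (by omega) hm h
      have key := chain_down_aux ψ (j.val - i.val) i.val i.isLt (by omega)
        (fun k hk1 hk2 => hDneg k (by omega))
      have heq : (⟨i.val + (j.val - i.val), by omega⟩ : Fin ℓ) = j :=
        Fin.ext (by show i.val + (j.val - i.val) = j.val; omega)
      have heq2 : (⟨i.val, i.isLt⟩ : Fin ℓ) = i := Fin.ext rfl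
      rw [heq, heq2] at key
      exact key
  · -- nondecreasing everywhere
    push_neg at hex
    refine ⟨⟨ℓ - 1, by omega⟩, ?_, ?_⟩
    · intro i j hij _
      have hij' : i.val ≤ j.val := hij
      have key := chain_up_aux ψ (j.val - i.val) i.val i.isLt (by omega)
        (fun k _ _ => hex k)
      have heq : (⟨i.val + (j.val - i.val), by omega⟩ : Fin ℓ) = j :=
        Fin.ext (by show i.val + (j.val - i.val) = j.val; omega)
      have heq2 : (⟨i.val, i.isLt⟩ : Fin ℓ) = i := Fin.ext rfl
      rw [heq, heq2] at key
      exact key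
    · intro i j hmi hij
      have hmi' : ℓ - 1 ≤ i.val := hmi
      have hij' : i.val ≤ j.val := hij
      have : i = j := Fin.ext (by omega)
      rw [this]
end

section
/- (Discrete Poincaré inequality for reversible chains) Let P be a reversible ergodic transition matrix with stationary distribution π on a finite graph, and fix for every ordered pair (x,y) of distinct vertices a canonical path γ_{xy} using each edge at most once. Define Q(e) = π_{e₁}P_{e₁e₂} for each edge e, |γ_{xy}| = Σ_{e∈γ_{xy}} 1/Q(e), and κ = max_e Σ_{γ_{xy} ∋ e} |γ_{xy}| π_x π_y. Then the spectral gap of P satisfies 1 − λ₂(P) ≥ 1/κ. -/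
open Matrix

/-- The weighted length `|γ_{xy}| = Σ_{e∈γ_{xy}} 1/Q(e)` of a canonical path,
where `Q(x,y) = π_x P_{xy}` is the flow across an edge. -/
noncomputable def pathWeight {V : Type*} {G : SimpleGraph V}
    (P : Matrix V V ℝ) (π : V → ℝ) {x y : V} (w : G.Walk x y) : ℝ :=
  (w.darts.map (fun d => (π d.toProd.1 * P d.toProd.1 d.toProd.2)⁻¹)).sum

/-- The Poincaré constant `κ = max_e Σ_{γ_{xy} ∋ e} |γ_{xy}| π_x π_y` for a family of
canonical paths `Γ`. -/
noncomputable def poincareConst {V : Type*} [Fintype V] [DecidableEq V]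
    (G : SimpleGraph V) (P : Matrix V V ℝ) (π : V → ℝ)
    (Γ : ∀ x y : V, G.Walk x y) : ℝ :=
  sSup {c : ℝ | ∃ e ∈ G.edgeSet,
    c = ∑ x, ∑ y, if x ≠ y ∧ e ∈ (Γ x y).edges
      then pathWeight P π (Γ x y) * π x * π y else 0}

/-!
If `P f = λ f` with `λ ≠ 1`, stationarity of `π` forces `∑ π f = 0`, so `Var_π f = ∑ π f²`, while
the Dirichlet form is `𝓔(f) = ∑ π f² - ∑ π f (P f) = (1 - λ) ∑ π f²`. Telescoping `f x - f y`
along `γ_{xy}` and applying Cauchy–Schwarz with weights `Q(e)⁻¹` and `Q(e)` gives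
`(f x - f y)² ≤ |γ_{xy}| ∑_{e ∈ γ_{xy}} Q(e) (∇_e f)²`. Averaging against `π x π y` and
exchanging the sums, every edge picks up its congestion, which is at most `κ`; hence
`Var_π f ≤ κ 𝓔(f)`, i.e. `1 ≤ κ (1 - λ)`.
-/

open Finset

theorem Matrix.exists_mulVec_eq_smul_of_mem_spectrum {K n : Type*} [Field K] [Fintype n]
    [DecidableEq n] {A : Matrix n n K} {μ : K} (h : μ ∈ spectrum K A) :
    ∃ v ≠ 0, A *ᵥ v = μ • v := by
  rw [← spectrum_toLin', ← Module.End.hasEigenvalue_iff_mem_spectrum] at h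
  obtain ⟨v, hv⟩ := h.exists_hasEigenvector
  exact ⟨v, hv.2, by simpa using hv.apply_eq_smul⟩

namespace SimpleGraph.Walk

variable {V : Type*} {G : SimpleGraph V}

theorem sum_map_darts_sub (f : V → ℝ) : ∀ {x y : V} (w : G.Walk x y),
    (w.darts.map fun d => f d.fst - f d.snd).sum = f x - f y
  | _, _, nil => by simp
  | _, _, cons _ p => by
      rw [darts_cons, List.map_cons, List.sum_cons, sum_map_darts_sub f p]
      ring

theorem IsTrail.nodup_map_toProd_darts {x y : V} {w : G.Walk x y} (hw : w.IsTrail) :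
    (w.darts.map Dart.toProd).Nodup :=
  (hw.edges_nodup.of_map _).map Dart.ext

end SimpleGraph.Walk

section CanonicalPaths

variable {V : Type*} {G : SimpleGraph V} {P : Matrix V V ℝ} {π : V → ℝ}

theorem pathWeight_nonneg (hP : ∀ a b, 0 ≤ P a b) (hπ : ∀ a, 0 ≤ π a) {x y : V}
    (w : G.Walk x y) : 0 ≤ pathWeight P π w :=
  List.sum_nonneg fun _ hr => by
    obtain ⟨d, -, rfl⟩ := List.mem_map.1 hr
    exact inv_nonneg.2 (mul_nonneg (hπ _) (hP _ _))

variable [Fintype V] [DecidableEq V]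

theorem SimpleGraph.Walk.IsTrail.sq_sub_le_pathWeight_mul (hP : ∀ a b, 0 ≤ P a b)
    (hπ : ∀ a, 0 ≤ π a) {x y : V} {w : G.Walk x y} (hw : w.IsTrail)
    (hQ : ∀ d ∈ w.darts, 0 < π d.fst * P d.fst d.snd) (f : V → ℝ) :
    (f x - f y) ^ 2 ≤ pathWeight P π w *
      ∑ a, ∑ b, if s(a, b) ∈ w.edges then π a * P a b * (f a - f b) ^ 2 else 0 := by
  set L := w.darts.map Dart.toProd
  have hL : L.Nodup := hw.nodup_map_toProd_darts
  have hQL : ∀ p ∈ L.toFinset, 0 < π p.1 * P p.1 p.2 := by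
    intro p hp
    obtain ⟨d, hd, rfl⟩ := List.mem_map.1 (List.mem_toFinset.1 hp)
    exact hQ d hd
  have hweight : pathWeight P π w = ∑ p ∈ L.toFinset, (π p.1 * P p.1 p.2)⁻¹ := by
    rw [List.sum_toFinset _ hL, List.map_map]
    rfl
  have hdiff : f x - f y = ∑ p ∈ L.toFinset, (f p.1 - f p.2) := by
    rw [List.sum_toFinset _ hL, List.map_map, ← w.sum_map_darts_sub f]
    rfl
  have hsub : L.toFinset ⊆ univ.filter fun p : V × V => s(p.1, p.2) ∈ w.edges := by
    intro p hp
    obtain ⟨d, hd, rfl⟩ := List.mem_map.1 (List.mem_toFinset.1 hp)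
    exact mem_filter.2 ⟨mem_univ _, List.mem_map_of_mem hd⟩
  calc (f x - f y) ^ 2
      ≤ (∑ p ∈ L.toFinset, (π p.1 * P p.1 p.2)⁻¹) *
          ∑ p ∈ L.toFinset, π p.1 * P p.1 p.2 * (f p.1 - f p.2) ^ 2 := by
        rw [hdiff]
        refine sum_sq_le_sum_mul_sum_of_sq_le_mul _ (fun p hp => (inv_pos.2 (hQL p hp)).le)
          (fun p hp => mul_nonneg (hQL p hp).le (sq_nonneg _)) fun p hp => ?_
        rw [← mul_assoc, inv_mul_cancel₀ (hQL p hp).ne', one_mul]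
    _ ≤ pathWeight P π w * ∑ p ∈ univ.filter fun p : V × V => s(p.1, p.2) ∈ w.edges,
          π p.1 * P p.1 p.2 * (f p.1 - f p.2) ^ 2 := by
        rw [← hweight]
        gcongr with p
        · exact pathWeight_nonneg hP hπ w
        · exact fun _ _ _ => mul_nonneg (mul_nonneg (hπ _) (hP _ _)) (sq_nonneg _)
    _ = _ := by rw [sum_filter, Fintype.sum_prod_type]

variable {Γ : ∀ x y : V, G.Walk x y}

variable (G P π Γ) in
noncomputable def congestion (e : Sym2 V) : ℝ :=
  ∑ x, ∑ y, if x ≠ y ∧ e ∈ (Γ x y).edges then pathWeight P π (Γ x y) * π x * π y else 0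

theorem congestion_nonneg (hP : ∀ a b, 0 ≤ P a b) (hπ : ∀ a, 0 ≤ π a) (e : Sym2 V) :
    0 ≤ congestion G P π Γ e :=
  sum_nonneg fun x _ => sum_nonneg fun y _ => by
    split_ifs
    · exact mul_nonneg (mul_nonneg (pathWeight_nonneg hP hπ _) (hπ x)) (hπ y)
    · exact le_rfl

theorem congestion_eq_zero_of_notMem_edgeSet {e : Sym2 V} (he : e ∉ G.edgeSet) :
    congestion G P π Γ e = 0 :=
  sum_eq_zero fun x _ => sum_eq_zero fun y _ =>
    if_neg fun h => he ((Γ x y).edges_subset_edgeSet h.2)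

theorem poincareConst_eq_sSup_image :
    poincareConst G P π Γ = sSup (congestion G P π Γ '' G.edgeSet) := by
  simp only [poincareConst, congestion, Set.image, eq_comm]

theorem poincareConst_nonneg (hP : ∀ a b, 0 ≤ P a b) (hπ : ∀ a, 0 ≤ π a) :
    0 ≤ poincareConst G P π Γ := by
  rw [poincareConst_eq_sSup_image]
  exact Real.sSup_nonneg <| Set.forall_mem_image.2 fun e _ => congestion_nonneg hP hπ e

theorem congestion_le_poincareConst (hP : ∀ a b, 0 ≤ P a b) (hπ : ∀ a, 0 ≤ π a)
    (e : Sym2 V) : congestion G P π Γ e ≤ poincareConst G P π Γ := by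
  by_cases he : e ∈ G.edgeSet
  · rw [poincareConst_eq_sSup_image]
    exact le_csSup (G.edgeSet.toFinite.image _).bddAbove ⟨e, he, rfl⟩
  · rw [congestion_eq_zero_of_notMem_edgeSet he]
    exact poincareConst_nonneg hP hπ

/-- The Poincaré inequality `Var_π f ≤ κ 𝓔(f)`, both sides multiplied by `2`. -/
theorem sum_sum_mul_mul_sq_sub_le_poincareConst_mul (hP : ∀ a b, 0 ≤ P a b) (hπ : ∀ a, 0 < π a)
    (htrail : ∀ x y, (Γ x y).IsTrail)
    (hQ : ∀ x y, ∀ d ∈ (Γ x y).darts, 0 < P d.fst d.snd) (f : V → ℝ) :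
    ∑ x, ∑ y, π x * π y * (f x - f y) ^ 2 ≤
      poincareConst G P π Γ * ∑ a, ∑ b, π a * P a b * (f a - f b) ^ 2 := by
  have hπ' : ∀ a, 0 ≤ π a := fun a => (hπ a).le
  set D : V → V → ℝ := fun a b => π a * P a b * (f a - f b) ^ 2
  calc ∑ x, ∑ y, π x * π y * (f x - f y) ^ 2
      ≤ ∑ x, ∑ y, ∑ a, ∑ b, if x ≠ y ∧ s(a, b) ∈ (Γ x y).edges
          then pathWeight P π (Γ x y) * π x * π y * D a b else 0 := by
        gcongr with x _ y _
        by_cases hxy : x = y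
        · simp [hxy]
        · have hpath := (htrail x y).sq_sub_le_pathWeight_mul hP hπ'
            (fun d hd => mul_pos (hπ _) (hQ x y d hd)) f
          calc π x * π y * (f x - f y) ^ 2
              ≤ π x * π y * (pathWeight P π (Γ x y) *
                  ∑ a, ∑ b, if s(a, b) ∈ (Γ x y).edges then D a b else 0) := by
                gcongr
                exact mul_nonneg (hπ' x) (hπ' y)
            _ = _ := by
                simp only [hxy, ne_eq, not_false_eq_true, true_and, mul_sum, mul_ite, mul_zero]
                ring_nf
    _ = ∑ a, ∑ b, congestion G P π Γ s(a, b) * D a b := by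
        simp only [congestion, sum_mul, ite_mul, zero_mul]
        exact (sum_congr rfl fun _ _ => sum_comm_cycle.trans sum_comm_cycle).trans
          (sum_comm_cycle.trans sum_comm_cycle)
    _ ≤ ∑ a, ∑ b, poincareConst G P π Γ * D a b := by
        gcongr with a _ b _
        · exact mul_nonneg (mul_nonneg (hπ' a) (hP a b)) (sq_nonneg _)
        · exact congestion_le_poincareConst hP hπ' _
    _ = _ := by simp only [D, mul_sum]

end CanonicalPaths

section StationaryChain

variable {V : Type*} [Fintype V] {P : Matrix V V ℝ} {π : V → ℝ}

theorem sum_sum_mul_mul_sq_sub_eq (hπ : ∑ x, π x = 1) (f : V → ℝ) :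
    ∑ x, ∑ y, π x * π y * (f x - f y) ^ 2 = 2 * (∑ x, π x * f x ^ 2 - (∑ x, π x * f x) ^ 2) := by
  have h : ∀ x y, π x * π y * (f x - f y) ^ 2 =
      π x * f x ^ 2 * π y - 2 * (π x * f x) * (π y * f y) + π x * (π y * f y ^ 2) :=
    fun x y => by ring
  simp only [h, sum_add_distrib, sum_sub_distrib, ← mul_sum, ← sum_mul, hπ]
  ring

theorem sum_sum_mul_apply_mul_sq_sub_eq (hstoch : ∀ x, ∑ y, P x y = 1)
    (hstat : ∀ y, ∑ x, π x * P x y = π y) (f : V → ℝ) :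
    ∑ x, ∑ y, π x * P x y * (f x - f y) ^ 2 =
      2 * (∑ x, π x * f x ^ 2 - ∑ x, π x * f x * (P *ᵥ f) x) := by
  have h : ∀ x y, π x * P x y * (f x - f y) ^ 2 =
      π x * f x ^ 2 * P x y - 2 * (π x * f x * (P x y * f y)) + π x * P x y * f y ^ 2 :=
    fun x y => by ring
  simp only [h, sum_add_distrib, sum_sub_distrib, ← mul_sum, hstoch]
  rw [sum_comm (f := fun x y => π x * P x y * f y ^ 2)]
  simp only [← sum_mul, hstat, mulVec, dotProduct]
  ring

theorem sum_mul_eq_zero_of_mulVec_eq_smul (hstat : ∀ y, ∑ x, π x * P x y = π y) {f : V → ℝ}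
    {μ : ℝ} (hf : P *ᵥ f = μ • f) (hμ : μ ≠ 1) : ∑ x, π x * f x = 0 := by
  have hπP : π ᵥ* P = π := funext hstat
  have h : μ * (π ⬝ᵥ f) = π ⬝ᵥ f := by
    rw [← smul_eq_mul, ← dotProduct_smul, ← hf, dotProduct_mulVec, hπP]
  exact (mul_left_eq_self₀.1 h).resolve_left hμ

end StationaryChain

theorem stmt_13_general {V : Type*} [Fintype V] [DecidableEq V]
    (G : SimpleGraph V)
    (P : Matrix V V ℝ) (hnonneg : ∀ x y, 0 ≤ P x y)
    (hstoch : ∀ x, ∑ y, P x y = 1)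
    (π : V → ℝ) (hπpos : ∀ x, 0 < π x) (hπsum : ∑ x, π x = 1)
    (hstat : ∀ y, ∑ x, π x * P x y = π y)
    (Γ : ∀ x y : V, G.Walk x y)
    (htrail : ∀ x y, (Γ x y).IsTrail)
    (hQpos : ∀ x y, ∀ d ∈ (Γ x y).darts, 0 < P d.toProd.1 d.toProd.2)
    (lam₂ : ℝ) (hlam₂ : IsGreatest {μ | μ ∈ spectrum ℝ P ∧ μ ≠ 1} lam₂) :
    1 - lam₂ ≥ 1 / poincareConst G P π Γ := by
  obtain ⟨⟨hspec, hne⟩, -⟩ := hlam₂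
  obtain ⟨f, hf0, hf⟩ := exists_mulVec_eq_smul_of_mem_spectrum hspec
  set κ := poincareConst G P π Γ
  set S := ∑ x, π x * f x ^ 2
  have hS : 0 < S := by
    obtain ⟨z, hz⟩ := Function.ne_iff.1 hf0
    exact sum_pos' (fun x _ => mul_nonneg (hπpos x).le (sq_nonneg _))
      ⟨z, mem_univ z, mul_pos (hπpos z) (pow_two_pos_of_ne_zero hz)⟩
  have hmean : ∑ x, π x * f x = 0 := sum_mul_eq_zero_of_mulVec_eq_smul hstat hf hne
  have hPf : ∑ x, π x * f x * (P *ᵥ f) x = lam₂ * S := by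
    simp only [hf, Pi.smul_apply, smul_eq_mul, S, mul_sum]
    exact sum_congr rfl fun x _ => by ring
  have hgap : 1 ≤ κ * (1 - lam₂) := by
    refine le_of_mul_le_mul_right ?_ (mul_pos two_pos hS)
    calc 1 * (2 * S) = ∑ x, ∑ y, π x * π y * (f x - f y) ^ 2 := by
          rw [sum_sum_mul_mul_sq_sub_eq hπsum, hmean]
          ring
      _ ≤ κ * ∑ a, ∑ b, π a * P a b * (f a - f b) ^ 2 :=
          sum_sum_mul_mul_sq_sub_le_poincareConst_mul hnonneg hπpos htrail hQpos f
      _ = κ * (1 - lam₂) * (2 * S) := by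
          rw [sum_sum_mul_apply_mul_sq_sub_eq hstoch hstat, hPf]
          ring
  have hκ0 : 0 ≤ κ := poincareConst_nonneg hnonneg fun x => (hπpos x).le
  have hκ : 0 < κ := hκ0.lt_of_ne fun h => by
    rw [← h, zero_mul] at hgap
    linarith
  rw [ge_iff_le, div_le_iff₀ hκ, mul_comm]
  exact hgap

/-- Diaconis–Stroock's Poincaré inequality: for a reversible ergodic transition matrix
`P` with stationary distribution `π` and any choice of canonical paths (each using
every edge at most once, along edges of positive transition probability), the spectral
gap satisfies `1 − λ₂ ≥ 1/κ`. -/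
theorem stmt_13 {V : Type*} [Fintype V] [DecidableEq V]
    (G : SimpleGraph V) [DecidableRel G.Adj] (hG : G.Connected)
    (P : Matrix V V ℝ) (hnonneg : ∀ x y, 0 ≤ P x y)
    (hstoch : ∀ x, ∑ y, P x y = 1)
    (hsupp : ∀ x y, x ≠ y → ¬G.Adj x y → P x y = 0)
    (π : V → ℝ) (hπpos : ∀ x, 0 < π x) (hπsum : ∑ x, π x = 1)
    (hstat : ∀ y, ∑ x, π x * P x y = π y)
    (hrev : ∀ x y, π x * P x y = π y * P y x)
    (hergodic : ∀ x y, ∃ N : ℕ, ∀ s, N ≤ s → 0 < (P ^ s) x y)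
    (Γ : ∀ x y : V, G.Walk x y)
    (htrail : ∀ x y, (Γ x y).IsTrail)
    (hQpos : ∀ x y, ∀ d ∈ (Γ x y).darts, 0 < P d.toProd.1 d.toProd.2)
    (lam₂ : ℝ) (hlam₂ : IsGreatest {μ | μ ∈ spectrum ℝ P ∧ μ ≠ 1} lam₂) :
    1 - lam₂ ≥ 1 / poincareConst G P π Γ :=
  stmt_13_general G P hnonneg hstoch π hπpos hπsum hstat Γ htrail hQpos lam₂ hlam₂
end

section
/- Let ψ : {1,…,ℓ} → (0,∞) be unimodal (there is m with ψ nondecreasing on [1,m] and nonincreasing on [m,ℓ]) and Σ_v ψ(v)² = 1. Then for any 1 ≤ j ≤ ℓ−1, 2 Σ_{s≤j} Σ_{f>j} ψ(s)²ψ(f)² Σ_{s≤v<f} 1/(ψ(v)ψ(v+1)) ≤ ℓ(ℓ−1). -/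
open Finset

/-!
By unimodality, `ψ` attains its minimum over a segment `[s, f]` at an endpoint, so each
`1 / (ψ v ψ (v+1))` with `s ≤ v < f` is at most `1 / min (ψ s, ψ f)²`. Since
`ψ s² ψ f² = min² · max²`, the contribution of the pair `(s, f)` is at most
`(f - s) · max (ψ s, ψ f)² ≤ (f - s) (ψ s² + ψ f²)`. For fixed `s` (resp. `f`) the distances
`f - s` are dominated by the distances from `1` (resp. to `ℓ`), which sum to `ℓ(ℓ-1)/2`, and
the normalisation `Σ ψ² = 1` finishes the bound.
-/

theorem min_le_of_monotoneOn_of_antitoneOn {α β : Type*} [LinearOrder α] [LinearOrder β]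
    {g : α → β} {a b m x : α} (hmono : MonotoneOn g (Set.Icc a m))
    (hanti : AntitoneOn g (Set.Icc m b)) (hx : x ∈ Set.Icc a b) :
    min (g a) (g b) ≤ g x := by
  rcases le_total x m with hxm | hmx
  · exact (min_le_left _ _).trans (hmono ⟨le_rfl, hx.1.trans hxm⟩ ⟨hx.1, hxm⟩ hx.1)
  · exact (min_le_right _ _).trans (hanti ⟨hmx, hx.2⟩ ⟨hmx.trans hx.2, le_rfl⟩ hx.2)

theorem sum_Ico_one_div_mul_succ_le {ψ : ℕ → ℝ} {s f : ℕ} {c : ℝ} (hc : 0 < c)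
    (hsf : s ≤ f) (hψ : ∀ v ∈ Icc s f, c ≤ ψ v) :
    ∑ v ∈ Ico s f, 1 / (ψ v * ψ (v + 1)) ≤ ((f : ℝ) - s) / c ^ 2 := by
  have hterm : ∀ v ∈ Ico s f, 1 / (ψ v * ψ (v + 1)) ≤ 1 / c ^ 2 := by
    intro v hv
    obtain ⟨hsv, hvf⟩ := mem_Ico.1 hv
    have h₀ := hψ v (mem_Icc.2 ⟨hsv, hvf.le⟩)
    have h₁ := hψ (v + 1) (mem_Icc.2 ⟨by omega, hvf⟩)
    exact one_div_le_one_div_of_le (by positivity) (sq c ▸ mul_le_mul h₀ h₁ hc.le (hc.le.trans h₀))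
  calc ∑ v ∈ Ico s f, 1 / (ψ v * ψ (v + 1))
      ≤ ∑ _v ∈ Ico s f, 1 / c ^ 2 := sum_le_sum hterm
    _ = ((f : ℝ) - s) / c ^ 2 := by
      rw [sum_const, Nat.card_Ico, nsmul_eq_mul, Nat.cast_sub hsf, mul_one_div]

theorem sq_mul_sq_mul_sum_Ico_le {ψ : ℕ → ℝ} {s f : ℕ} (hs : 0 < ψ s) (hf : 0 < ψ f)
    (hsf : s ≤ f) (hψ : ∀ v ∈ Icc s f, min (ψ s) (ψ f) ≤ ψ v) :
    ψ s ^ 2 * ψ f ^ 2 * ∑ v ∈ Ico s f, 1 / (ψ v * ψ (v + 1))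
      ≤ ((f : ℝ) - s) * (ψ s ^ 2 + ψ f ^ 2) := by
  have hmin : 0 < min (ψ s) (ψ f) := lt_min hs hf
  have hlen : (0 : ℝ) ≤ f - s := sub_nonneg.2 (by exact_mod_cast hsf)
  have hmax : max (ψ s) (ψ f) ^ 2 ≤ ψ s ^ 2 + ψ f ^ 2 := by
    rcases max_choice (ψ s) (ψ f) with h | h <;> rw [h] <;> nlinarith
  calc ψ s ^ 2 * ψ f ^ 2 * ∑ v ∈ Ico s f, 1 / (ψ v * ψ (v + 1))
      ≤ min (ψ s) (ψ f) ^ 2 * max (ψ s) (ψ f) ^ 2 * (((f : ℝ) - s) / min (ψ s) (ψ f) ^ 2) := by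
        rw [← mul_pow, ← mul_pow, min_mul_max]
        gcongr
        exact sum_Ico_one_div_mul_succ_le hmin hsf hψ
    _ = ((f : ℝ) - s) * max (ψ s) (ψ f) ^ 2 := by field_simp
    _ ≤ ((f : ℝ) - s) * (ψ s ^ 2 + ψ f ^ 2) := by gcongr

theorem sum_Icc_cast_sub_one (ℓ : ℕ) : ∑ f ∈ Icc 1 ℓ, ((f : ℝ) - 1) = ℓ * (ℓ - 1) / 2 := by
  induction ℓ with
  | zero => simp
  | succ ℓ ih =>
    rw [sum_Icc_succ_top (by omega), ih]
    push_cast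
    ring

theorem sum_Icc_sub_cast (ℓ : ℕ) : ∑ s ∈ Icc 1 ℓ, ((ℓ : ℝ) - s) = ℓ * (ℓ - 1) / 2 := by
  have h := sum_Icc_cast_sub_one ℓ
  rw [sum_sub_distrib, sum_const, Nat.card_Icc, nsmul_eq_mul, add_tsub_cancel_right] at *
  linarith

theorem sum_Icc_cast_sub_le {ℓ j s : ℕ} (hs : 1 ≤ s) :
    ∑ f ∈ Icc (j + 1) ℓ, ((f : ℝ) - s) ≤ ℓ * (ℓ - 1) / 2 := by
  rw [← sum_Icc_cast_sub_one]
  calc ∑ f ∈ Icc (j + 1) ℓ, ((f : ℝ) - s)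
      ≤ ∑ f ∈ Icc (j + 1) ℓ, ((f : ℝ) - 1) := by
        gcongr; exact_mod_cast hs
    _ ≤ ∑ f ∈ Icc 1 ℓ, ((f : ℝ) - 1) := by
        refine sum_le_sum_of_subset_of_nonneg (Icc_subset_Icc_left (by omega)) fun f hf _ => ?_
        simpa using (mem_Icc.1 hf).1

theorem sum_Icc_sub_cast_le {ℓ j f : ℕ} (hj : j ≤ ℓ) (hf : f ≤ ℓ) :
    ∑ s ∈ Icc 1 j, ((f : ℝ) - s) ≤ ℓ * (ℓ - 1) / 2 := by
  rw [← sum_Icc_sub_cast]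
  calc ∑ s ∈ Icc 1 j, ((f : ℝ) - s)
      ≤ ∑ s ∈ Icc 1 j, ((ℓ : ℝ) - s) := by gcongr
    _ ≤ ∑ s ∈ Icc 1 ℓ, ((ℓ : ℝ) - s) := by
        refine sum_le_sum_of_subset_of_nonneg (Icc_subset_Icc_right hj) fun s hs _ => ?_
        simpa using (mem_Icc.1 hs).2

theorem sum_Icc_add_sum_Icc_succ {x : ℕ → ℝ} {ℓ j : ℕ} (hj : j ≤ ℓ) :
    ∑ s ∈ Icc 1 j, x s + ∑ f ∈ Icc (j + 1) ℓ, x f = ∑ v ∈ Icc 1 ℓ, x v := by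
  rw [Icc_add_one_left_eq_Ioc, ← zero_add 1, Icc_add_one_left_eq_Ioc, Icc_add_one_left_eq_Ioc]
  exact sum_Ioc_consecutive x (Nat.zero_le j) hj

theorem sum_Icc_sum_Icc_sub_mul_add_le {x : ℕ → ℝ} (hx : ∀ v, 0 ≤ x v) {ℓ j : ℕ}
    (hj : j ≤ ℓ) :
    ∑ s ∈ Icc 1 j, ∑ f ∈ Icc (j + 1) ℓ, ((f : ℝ) - s) * (x s + x f)
      ≤ ℓ * (ℓ - 1) / 2 * ∑ v ∈ Icc 1 ℓ, x v := by
  set K : ℝ := ℓ * (ℓ - 1) / 2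
  have hleft : ∀ s ∈ Icc 1 j, ∑ f ∈ Icc (j + 1) ℓ, ((f : ℝ) - s) * x s ≤ K * x s :=
    fun s hs => by
      rw [← sum_mul]
      exact mul_le_mul_of_nonneg_right (sum_Icc_cast_sub_le (mem_Icc.1 hs).1) (hx s)
  have hright : ∀ f ∈ Icc (j + 1) ℓ, ∑ s ∈ Icc 1 j, ((f : ℝ) - s) * x f ≤ K * x f :=
    fun f hf => by
      rw [← sum_mul]
      exact mul_le_mul_of_nonneg_right (sum_Icc_sub_cast_le hj (mem_Icc.1 hf).2) (hx f)
  calc ∑ s ∈ Icc 1 j, ∑ f ∈ Icc (j + 1) ℓ, ((f : ℝ) - s) * (x s + x f)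
      = ∑ s ∈ Icc 1 j, ∑ f ∈ Icc (j + 1) ℓ, ((f : ℝ) - s) * x s
        + ∑ f ∈ Icc (j + 1) ℓ, ∑ s ∈ Icc 1 j, ((f : ℝ) - s) * x f := by
        simp only [mul_add, sum_add_distrib]
        exact congrArg _ sum_comm
    _ ≤ ∑ s ∈ Icc 1 j, K * x s + ∑ f ∈ Icc (j + 1) ℓ, K * x f :=
        add_le_add (sum_le_sum hleft) (sum_le_sum hright)
    _ = K * ∑ v ∈ Icc 1 ℓ, x v := by
        rw [← mul_sum, ← mul_sum, ← mul_add, sum_Icc_add_sum_Icc_succ hj]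

theorem stmt_15_general (ℓ : ℕ) (ψ : ℕ → ℝ)
    (hpos : ∀ v ∈ Icc 1 ℓ, 0 < ψ v)
    (hunimodal : ∃ m ∈ Icc 1 ℓ,
      (∀ i ∈ Icc 1 ℓ, ∀ j ∈ Icc 1 ℓ, i ≤ j → j ≤ m → ψ i ≤ ψ j) ∧
      (∀ i ∈ Icc 1 ℓ, ∀ j ∈ Icc 1 ℓ, m ≤ i → i ≤ j → ψ j ≤ ψ i))
    (hnorm : ∑ v ∈ Icc 1 ℓ, ψ v ^ 2 = 1)
    (j : ℕ) (hj2 : j ≤ ℓ - 1) :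
    2 * ∑ s ∈ Icc 1 j, ∑ f ∈ Icc (j + 1) ℓ,
        ψ s ^ 2 * ψ f ^ 2 * ∑ v ∈ Ico s f, 1 / (ψ v * ψ (v + 1))
      ≤ (ℓ : ℝ) * ((ℓ : ℝ) - 1) := by
  obtain ⟨m, hm, hup, hdown⟩ := hunimodal
  have hmono : MonotoneOn ψ (Set.Icc 1 m) := fun a ha b hb hab =>
    hup a (mem_Icc.2 ⟨ha.1, ha.2.trans (mem_Icc.1 hm).2⟩)
      b (mem_Icc.2 ⟨hb.1, hb.2.trans (mem_Icc.1 hm).2⟩) hab hb.2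
  have hanti : AntitoneOn ψ (Set.Icc m ℓ) := fun a ha b hb hab =>
    hdown a (mem_Icc.2 ⟨(mem_Icc.1 hm).1.trans ha.1, ha.2⟩)
      b (mem_Icc.2 ⟨(mem_Icc.1 hm).1.trans hb.1, hb.2⟩) ha.1 hab
  have hpair : ∀ s ∈ Icc 1 j, ∀ f ∈ Icc (j + 1) ℓ,
      ψ s ^ 2 * ψ f ^ 2 * ∑ v ∈ Ico s f, 1 / (ψ v * ψ (v + 1))
        ≤ ((f : ℝ) - s) * (ψ s ^ 2 + ψ f ^ 2) := by
    intro s hs f hf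
    rw [mem_Icc] at hs hf
    refine sq_mul_sq_mul_sum_Ico_le (hpos s (mem_Icc.2 ⟨hs.1, by omega⟩))
      (hpos f (mem_Icc.2 ⟨by omega, hf.2⟩)) (by omega) fun v hv => ?_
    exact min_le_of_monotoneOn_of_antitoneOn
      (hmono.mono (Set.Icc_subset_Icc_left hs.1)) (hanti.mono (Set.Icc_subset_Icc_right hf.2))
      (Finset.coe_Icc s f ▸ hv)
  calc 2 * ∑ s ∈ Icc 1 j, ∑ f ∈ Icc (j + 1) ℓ,
        ψ s ^ 2 * ψ f ^ 2 * ∑ v ∈ Ico s f, 1 / (ψ v * ψ (v + 1))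
      ≤ 2 * ∑ s ∈ Icc 1 j, ∑ f ∈ Icc (j + 1) ℓ, ((f : ℝ) - s) * (ψ s ^ 2 + ψ f ^ 2) := by
        gcongr 2 * ?_
        exact sum_le_sum fun s hs => sum_le_sum fun f hf => hpair s hs f hf
    _ ≤ 2 * (ℓ * (ℓ - 1) / 2 * ∑ v ∈ Icc 1 ℓ, ψ v ^ 2) := by
        gcongr
        exact sum_Icc_sum_Icc_sub_mul_add_le (fun v => sq_nonneg (ψ v)) (by omega)
    _ = ℓ * (ℓ - 1) := by rw [hnorm]; ring

/-- Key combinatorial estimate for the Poincaré bound on path graphs: if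
`ψ : {1,…,ℓ} → (0,∞)` is unimodal with `Σ_v ψ(v)² = 1`, then for any `1 ≤ j ≤ ℓ−1`,
`2 Σ_{s≤j} Σ_{f>j} ψ(s)²ψ(f)² Σ_{s≤v<f} 1/(ψ(v)ψ(v+1)) ≤ ℓ(ℓ−1)`. -/
theorem stmt_15 (ℓ : ℕ) (hℓ : 1 ≤ ℓ) (ψ : ℕ → ℝ)
    (hpos : ∀ v ∈ Icc 1 ℓ, 0 < ψ v)
    (hunimodal : ∃ m ∈ Icc 1 ℓ,
      (∀ i ∈ Icc 1 ℓ, ∀ j ∈ Icc 1 ℓ, i ≤ j → j ≤ m → ψ i ≤ ψ j) ∧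
      (∀ i ∈ Icc 1 ℓ, ∀ j ∈ Icc 1 ℓ, m ≤ i → i ≤ j → ψ j ≤ ψ i))
    (hnorm : ∑ v ∈ Icc 1 ℓ, ψ v ^ 2 = 1)
    (j : ℕ) (hj1 : 1 ≤ j) (hj2 : j ≤ ℓ - 1) :
    2 * ∑ s ∈ Icc 1 j, ∑ f ∈ Icc (j + 1) ℓ,
        ψ s ^ 2 * ψ f ^ 2 * ∑ v ∈ Ico s f, 1 / (ψ v * ψ (v + 1))
      ≤ (ℓ : ℝ) * ((ℓ : ℝ) - 1) :=
  stmt_15_general ℓ ψ hpos hunimodal hnorm j hj2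
end
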